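/- arXiv:1905.10438 — 11 statements merged into one kernel-verified Lean document; each statement's English description precedes it below -/
import Mathlib

section
/- For every real x ≥ 0 and every real ω with |ω| < x + 1, the following identity of convergent series holds: ∑_{k=0}^∞ ( 1/(x+k+1) − 1/(x+ω+k+1) ) = ∑_{j=0}^∞ (−1)^j · ω^{j+1} · ( ∑_{k=0}^∞ 1/(x+k+1)^{j+2} ). -/
/-!
Expanding `1/b - 1/(b + ω) = (ω / b²) · 1/(1 + ω/b)` as a geometric series in `-ω/b` writes
each term of the left-hand series as a row sum of the double family
`(-1)^j ω^(j+1) / (x+k+1)^(j+2)`. Since `x + k + 1 ≥ x + 1 > |ω|`, this family is dominated by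
the product of the geometric sequence `|ω| (|ω|/(x+1))^j` and the summable sequence
`1/(x+k+1)²`, so it is absolutely summable and its row and column sums may be interchanged.
-/

lemma hasSum_alternating_pow_div {b ω : ℝ} (hω : |ω| < b) :
    HasSum (fun j : ℕ => (-1) ^ j * ω ^ (j + 1) * (1 / b ^ (j + 2))) (1 / b - 1 / (b + ω)) := by
  have hb : 0 < b := (abs_nonneg ω).trans_lt hω
  have hbω : 0 < b + ω := by linarith [neg_abs_le ω]
  have hratio : |-ω / b| < 1 := by
    rwa [abs_div, abs_neg, abs_of_pos hb, div_lt_one hb]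
  have hvalue : 1 / b - 1 / (b + ω) = ω / b ^ 2 * (1 - -ω / b)⁻¹ := by
    rw [neg_div, sub_neg_eq_add, one_add_div hb.ne', inv_div]
    field_simp
    ring
  rw [hvalue]
  refine ((hasSum_geometric_of_abs_lt_one hratio).mul_left (ω / b ^ 2)).congr_fun fun j => ?_
  rw [neg_div, neg_pow (ω / b), div_pow]
  field_simp
  ring

lemma norm_alternating_pow_div_le {a b ω : ℝ} (ha : 0 < a) (hab : a ≤ b) (j : ℕ) :
    ‖(-1) ^ j * ω ^ (j + 1) * (1 / b ^ (j + 2))‖ ≤ |ω| * (|ω| / a) ^ j * (1 / b ^ 2) := by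
  have hb : 0 < b := ha.trans_le hab
  calc ‖(-1) ^ j * ω ^ (j + 1) * (1 / b ^ (j + 2))‖ = |ω| * (|ω| / b) ^ j * (1 / b ^ 2) := by
        rw [Real.norm_eq_abs, abs_mul, abs_mul, abs_pow, abs_neg, abs_one, one_pow, one_mul,
          abs_pow, abs_div, abs_one, abs_pow, abs_of_pos hb, div_pow]
        field_simp
        ring
    _ ≤ |ω| * (|ω| / a) ^ j * (1 / b ^ 2) := by gcongr

lemma summable_uncurry_alternating_pow_div {a ω : ℝ} {b : ℕ → ℝ} (hω : |ω| < a)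
    (hab : ∀ k, a ≤ b k) (hb : Summable fun k => 1 / b k ^ 2) :
    Summable (Function.uncurry fun (j k : ℕ) =>
      (-1) ^ j * ω ^ (j + 1) * (1 / b k ^ (j + 2))) := by
  have ha : 0 < a := (abs_nonneg ω).trans_lt hω
  have hgeom : Summable fun j : ℕ => |ω| * (|ω| / a) ^ j :=
    (summable_geometric_of_lt_one (by positivity) ((div_lt_one ha).2 hω)).mul_left _
  refine .of_norm_bounded (hgeom.mul_of_nonneg hb (fun _ => by positivity) (fun _ => by positivity))
    fun ⟨j, k⟩ => norm_alternating_pow_div_le ha (hab k) j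

lemma summable_one_div_add_nat_add_one_sq (x : ℝ) :
    Summable fun k : ℕ => 1 / (x + k + 1) ^ 2 := by
  refine ((Real.summable_one_div_nat_add_rpow (x + 1) 2).2 one_lt_two).congr fun k => ?_
  rw [Real.rpow_two, sq_abs]
  ring_nf

theorem tsum_diff_eq_power_series_general (x ω : ℝ) (hω : |ω| < x + 1) :
    Summable (fun k : ℕ => (1 / (x + k + 1) - 1 / (x + ω + k + 1) : ℝ)) ∧
    Summable (fun j : ℕ =>
      (-1) ^ j * ω ^ (j + 1) * ∑' k : ℕ, (1 / (x + k + 1) ^ (j + 2) : ℝ)) ∧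
    (∑' k : ℕ, (1 / (x + k + 1) - 1 / (x + ω + k + 1) : ℝ)) =
      ∑' j : ℕ, (-1) ^ j * ω ^ (j + 1) * ∑' k : ℕ, (1 / (x + k + 1) ^ (j + 2) : ℝ) := by
  set g : ℕ → ℕ → ℝ := fun j k => (-1) ^ j * ω ^ (j + 1) * (1 / (x + k + 1) ^ (j + 2))
  have hle : ∀ k : ℕ, x + 1 ≤ x + k + 1 := fun k => by linarith [k.cast_nonneg (α := ℝ)]
  have hsum : Summable (Function.uncurry g) :=
    summable_uncurry_alternating_pow_div hω hle (summable_one_div_add_nat_add_one_sq x)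
  have hrow : ∀ k : ℕ, ∑' j, g j k = 1 / (x + k + 1) - 1 / (x + ω + k + 1) := fun k => by
    rw [(hasSum_alternating_pow_div (hω.trans_le (hle k))).tsum_eq]
    ring_nf
  have hcol : ∀ j : ℕ,
      ∑' k, g j k = (-1) ^ j * ω ^ (j + 1) * ∑' k : ℕ, 1 / (x + k + 1) ^ (j + 2) :=
    fun _ => tsum_mul_left
  refine ⟨hsum.prod_symm.prod.congr hrow, hsum.prod.congr hcol, ?_⟩
  calc ∑' k : ℕ, (1 / (x + k + 1) - 1 / (x + ω + k + 1))
      = ∑' (k) (j), g j k := tsum_congr fun k => (hrow k).symm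
    _ = ∑' (j) (k), g j k := hsum.tsum_comm
    _ = _ := tsum_congr hcol

theorem tsum_diff_eq_power_series (x ω : ℝ) (hx : 0 ≤ x) (hω : |ω| < x + 1) :
    Summable (fun k : ℕ => (1 / (x + k + 1) - 1 / (x + ω + k + 1) : ℝ)) ∧
    Summable (fun j : ℕ =>
      (-1) ^ j * ω ^ (j + 1) * ∑' k : ℕ, (1 / (x + k + 1) ^ (j + 2) : ℝ)) ∧
    (∑' k : ℕ, (1 / (x + k + 1) - 1 / (x + ω + k + 1) : ℝ)) =
      ∑' j : ℕ, (-1) ^ j * ω ^ (j + 1) * ∑' k : ℕ, (1 / (x + k + 1) ^ (j + 2) : ℝ) :=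
  tsum_diff_eq_power_series_general x ω hω
end

section
/- For every natural number n ≥ 1 and every real ω with |ω| < 1: ∑_{k=0}^∞ ( 1/(k+1)^n − 1/(k+1+ω)^n ) = ∑_{j=0}^∞ (−1)^j · C(n+j, j+1) · ω^{j+1} · ζ(n+j+1), where C(a,b) is the binomial coefficient and ζ(s) = ∑_{m=0}^∞ 1/(m+1)^s. -/
theorem tsum_pow_diff_eq_binomial_zeta (n : ℕ) (hn : 1 ≤ n) (ω : ℝ) (hω : |ω| < 1) :
    (∑' k : ℕ, (1 / (k + 1) ^ n - 1 / (k + 1 + ω) ^ n : ℝ)) =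
      ∑' j : ℕ, (-1) ^ j * ((n + j).choose (j + 1) : ℝ) * ω ^ (j + 1) *
        ∑' m : ℕ, (1 / (m + 1) ^ (n + j + 1) : ℝ) := by
  obtain ⟨m, rfl⟩ : ∃ m, n = m + 1 := ⟨n - 1, by omega⟩
  have hω1 : (-1 : ℝ) < ω := neg_lt_of_abs_lt hω
  have hω2 : ω < 1 := lt_of_abs_lt hω
  set F : ℕ → ℕ → ℝ := fun k j =>
    (-1) ^ j * (((m + 1) + j).choose (j + 1) : ℝ) * ω ^ (j + 1) *
      (1 / ((k : ℝ) + 1) ^ ((m + 1) + j + 1)) with hF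
  have hK : ∀ k : ℕ, (1 : ℝ) ≤ (k : ℝ) + 1 := fun k => by
    have : (0:ℝ) ≤ (k:ℝ) := Nat.cast_nonneg k
    linarith
  have hKpos : ∀ k : ℕ, (0 : ℝ) < (k : ℝ) + 1 := fun k => by positivity
  have hKω : ∀ k : ℕ, (0 : ℝ) < (k : ℝ) + 1 + ω := fun k => by
    have := hK k; linarith
  have hchoose : ∀ j : ℕ, ((m + 1) + j).choose (j + 1) = (j + 1 + m).choose m := by
    intro j
    have h1 : j + 1 ≤ m + 1 + j := by omega
    have := Nat.choose_symm h1
    have h2 : m + 1 + j - (j + 1) = m := by omega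
    rw [h2] at this
    rw [← this]
    congr 1
    omega
  -- key pointwise HasSum
  have key : ∀ k : ℕ, HasSum (fun j => F k j)
      (1 / ((k : ℝ) + 1) ^ (m + 1) - 1 / ((k : ℝ) + 1 + ω) ^ (m + 1)) := by
    intro k
    set K : ℝ := (k : ℝ) + 1 with hKdef
    have hK0 : (0 : ℝ) < K := hKpos k
    have hK1 : (1 : ℝ) ≤ K := hK k
    have hKne : K ≠ 0 := ne_of_gt hK0
    have hKωne : K + ω ≠ 0 := ne_of_gt (hKω k)
    set r : ℝ := -ω / K with hr_def
    have hr : ‖r‖ < 1 := by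
      rw [Real.norm_eq_abs, abs_div, abs_neg]
      calc |ω| / |K| ≤ |ω| / 1 := by
            apply div_le_div_of_nonneg_left (abs_nonneg ω) one_pos ?_ |>.trans_eq rfl
            rwa [abs_of_pos hK0] at *
        _ = |ω| := div_one _
        _ < 1 := hω
    have h1 := hasSum_choose_mul_geometric_of_norm_lt_one (𝕜 := ℝ) m hr
    have h2 := h1.div_const (K ^ (m + 1))
    have h1r : 1 - r = (K + ω) / K := by
      rw [hr_def]; field_simp; ring
    have hval : 1 / (1 - r) ^ (m + 1) / K ^ (m + 1) = 1 / (K + ω) ^ (m + 1) := by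
      rw [h1r, div_pow, one_div_div, div_div, mul_comm, ← div_div,
        div_self (pow_ne_zero _ hKne)]
    rw [hval] at h2
    -- shift by 1
    have h3 := (hasSum_nat_add_iff' (f := fun j => ((j + m).choose m : ℝ) * r ^ j / K ^ (m + 1)) 1).mpr h2
    simp only [Finset.range_one, Finset.sum_singleton, Nat.zero_add, Nat.choose_self,
      Nat.cast_one, pow_zero, mul_one, one_mul] at h3
    have h4 := h3.neg
    have heq : ∀ j : ℕ, -(((j + 1 + m).choose m : ℝ) * r ^ (j + 1) / K ^ (m + 1)) = F k j := by
      intro j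
      simp only [hF]
      rw [hchoose j]
      rw [hr_def, div_pow, neg_pow ω]
      have : ((k : ℝ) + 1) = K := rfl
      rw [this]
      have hexp : K ^ (m + 1 + j + 1) = K ^ (j + 1) * K ^ (m + 1) := by
        rw [← pow_add]; ring_nf
      rw [hexp]
      field_simp
      ring
    rw [show (1 / K ^ (m + 1) - 1 / (K + ω) ^ (m + 1)) =
        -(1 / (K + ω) ^ (m + 1) - 1 / K ^ (m + 1)) by ring]
    exact (funext heq ▸ h4)
  -- summability of the double series
  have habs : Summable (Function.uncurry fun j k => F k j) := by
    apply Summable.of_norm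
    have hg : Summable (fun j : ℕ => (((m + 1) + j).choose (j + 1) : ℝ) * |ω| ^ (j + 1)) := by
      have hr : ‖|ω|‖ < 1 := by rwa [Real.norm_eq_abs, abs_abs]
      have h0 := summable_choose_mul_geometric_of_norm_lt_one (R := ℝ) m hr
      have h1 := (summable_nat_add_iff (f := fun j => ((j + m).choose m : ℝ) * |ω| ^ j) 1).mpr h0
      refine h1.congr fun j => ?_
      rw [hchoose j]
    have hh : Summable (fun k : ℕ => 1 / ((k : ℝ) + 1) ^ 2) := by
      have := (summable_nat_add_iff (f := fun k : ℕ => 1 / (k : ℝ) ^ 2) 1).mpr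
        (Real.summable_one_div_nat_pow.mpr one_lt_two)
      refine this.congr fun k => ?_
      push_cast
      ring_nf
    have hprod := hg.mul_of_nonneg hh
      (fun j => by positivity) (fun k => by positivity)
    apply Summable.of_nonneg_of_le (fun p => norm_nonneg _) ?_ hprod
    rintro ⟨j, k⟩
    simp only [Function.uncurry, hF]
    rw [Real.norm_eq_abs, abs_mul, abs_mul, abs_mul, abs_pow, abs_pow, abs_neg, abs_one,
      one_pow, one_mul, abs_of_nonneg (by positivity : (0:ℝ) ≤ (((m+1)+j).choose (j+1) : ℝ)),
      abs_of_nonneg (by positivity : (0:ℝ) ≤ 1 / ((k:ℝ)+1) ^ ((m+1)+j+1))]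
    have hb : 1 / ((k:ℝ)+1) ^ ((m+1)+j+1) ≤ 1 / ((k:ℝ)+1) ^ 2 := by
      apply one_div_le_one_div_of_le (by positivity)
      exact pow_le_pow_right₀ (hK k) (by omega)
    exact mul_le_mul_of_nonneg_left hb (by positivity)
  -- put everything together
  have step1 : (∑' k : ℕ, (1 / ((k:ℝ) + 1) ^ (m+1) - 1 / ((k:ℝ) + 1 + ω) ^ (m+1)))
      = ∑' k : ℕ, ∑' j : ℕ, F k j :=
    tsum_congr fun k => ((key k).tsum_eq).symm
  have step2 : (∑' k : ℕ, ∑' j : ℕ, F k j) = ∑' j : ℕ, ∑' k : ℕ, F k j := Summable.tsum_comm habs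
  have step3 : ∀ j : ℕ, (∑' k : ℕ, F k j)
      = (-1) ^ j * (((m+1)+j).choose (j+1) : ℝ) * ω ^ (j+1) *
        ∑' k : ℕ, (1 / ((k:ℝ)+1) ^ ((m+1)+j+1)) := fun j => tsum_mul_left
  rw [step1, step2]
  exact tsum_congr step3
end

section
/- For every real x > −1, Euler's infinite product representation of the Gamma function holds: Γ(x+1) = ∏_{n=0}^∞ ( (1 + 1/(n+1))^x / (1 + x/(n+1)) ), where the infinite product converges. -/
open Filter Finset Real Topology

private lemma log_taylor_bound {t : ℝ} (ht : |t| ≤ 1/2) : |Real.log (1 + t) - t| ≤ 2 * t ^ 2 := by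
  have h1 : |(-t)| < 1 := by rw [abs_neg]; linarith [abs_nonneg t]
  have h := Real.abs_log_sub_add_sum_range_le h1 1
  simp only [Finset.sum_range_one, pow_one, abs_neg, sub_neg_eq_add] at h
  norm_num at h
  have h2 : Real.log (1 + t) - t = -t + Real.log (1 + t) := by ring
  rw [h2]
  calc |-t + Real.log (1 + t)| ≤ t ^ 2 / (1 - |t|) := h
    _ ≤ t ^ 2 / (1/2) := by
        apply div_le_div_of_nonneg_left (by positivity) (by norm_num) (by linarith)
    _ = 2 * t ^ 2 := by ring

theorem gamma_euler_product (x : ℝ) (hx : -1 < x) :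
    Multipliable (fun n : ℕ => (1 + 1 / (n + 1)) ^ x / (1 + x / (n + 1)) : ℕ → ℝ) ∧
    Real.Gamma (x + 1) = ∏' n : ℕ, ((1 + 1 / (n + 1) : ℝ) ^ x / (1 + x / (n + 1))) := by
  set a : ℕ → ℝ := fun n : ℕ => (1 + 1 / (n + 1)) ^ x / (1 + x / (n + 1)) with ha
  have hnpos : ∀ n : ℕ, (0:ℝ) < (n:ℝ) + 1 := fun n => by positivity
  have hb : ∀ n : ℕ, (0:ℝ) < 1 + 1/((n:ℝ)+1) := fun n => by positivity
  have hc : ∀ n : ℕ, (0:ℝ) < 1 + x/((n:ℝ)+1) := by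
    intro n
    have h1 : (-1:ℝ) < x / ((n:ℝ)+1) := by
      rw [lt_div_iff₀ (hnpos n)]
      have := Nat.cast_nonneg (α := ℝ) n
      nlinarith
    linarith
  have ha_pos : ∀ n : ℕ, 0 < a n := fun n =>
    div_pos (Real.rpow_pos_of_pos (hb n) x) (hc n)
  -- summability of logs
  have hlog_sum : Summable (fun n : ℕ => Real.log (a n)) := by
    have hbase : Summable (fun n : ℕ => (2*|x| + 2*x^2) * (1/((n:ℝ)+1)^2)) := by
      apply Summable.mul_left
      have h0 : Summable (fun n : ℕ => 1/((n:ℝ))^2) :=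
        Real.summable_one_div_nat_pow.mpr one_lt_two
      have h1 := (summable_nat_add_iff 1).mpr h0
      apply h1.congr
      intro n; push_cast; ring
    apply Summable.of_norm_bounded_eventually_nat hbase
    filter_upwards [eventually_ge_atTop (⌈2*|x|⌉₊ + 1)] with n hn
    have hn1 : (1:ℕ) ≤ n := le_trans (Nat.le_add_left 1 _) hn
    have hnx : 2*|x| ≤ (n:ℝ) := by
      calc 2*|x| ≤ (⌈2*|x|⌉₊ : ℝ) := Nat.le_ceil _
        _ ≤ (n:ℝ) := by exact_mod_cast le_trans (Nat.le_add_right _ 1) hn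
    set u : ℝ := 1/((n:ℝ)+1) with hu
    have hu_pos : 0 < u := by positivity
    have hu_le : u ≤ 1/2 := by
      rw [hu]
      rw [div_le_div_iff₀ (hnpos n) two_pos]
      have : (1:ℝ) ≤ (n:ℝ) := by exact_mod_cast hn1
      linarith
    have hxu : |x * u| ≤ 1/2 := by
      rw [abs_mul, abs_of_pos hu_pos, hu, mul_one_div, div_le_div_iff₀ (hnpos n) two_pos]
      linarith
    have h1 := log_taylor_bound (t := u) (by rw [abs_of_pos hu_pos]; exact hu_le)
    have h2 := log_taylor_bound (t := x*u) hxu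
    have hxu_eq : x/((n:ℝ)+1) = x*u := by rw [hu]; ring
    have hlog : Real.log (a n) = x * Real.log (1+u) - Real.log (1+x*u) := by
      rw [ha]
      simp only
      rw [hxu_eq, Real.log_div (Real.rpow_pos_of_pos (hb n) x).ne' (by rw [← hxu_eq]; exact (hc n).ne'),
        Real.log_rpow (hb n)]
    rw [Real.norm_eq_abs, hlog]
    have key : x * Real.log (1+u) - Real.log (1+x*u)
        = x * (Real.log (1+u) - u) - (Real.log (1+x*u) - x*u) := by ring
    rw [key]
    calc |x * (Real.log (1+u) - u) - (Real.log (1+x*u) - x*u)|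
        ≤ |x * (Real.log (1+u) - u)| + |Real.log (1+x*u) - x*u| := abs_sub _ _
      _ ≤ |x| * (2*u^2) + 2*(x*u)^2 := by
          rw [abs_mul]
          exact add_le_add (mul_le_mul_of_nonneg_left h1 (abs_nonneg x)) h2
      _ = (2*|x| + 2*x^2) * u^2 := by ring
      _ = (2*|x| + 2*x^2) * (1/((n:ℝ)+1)^2) := by
          rw [hu, div_pow, one_pow]
  -- the product has value exp of the sum of logs
  have heq : (Real.exp ∘ fun n : ℕ => Real.log (a n)) = a := by
    funext n; simp [Real.exp_log (ha_pos n)]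
  have hprod : HasProd a (Real.exp (∑' n : ℕ, Real.log (a n))) := by
    have h := hlog_sum.hasSum.rexp
    rwa [heq] at h
  -- telescoping product
  have tele : ∀ N : ℕ, ∏ n ∈ range N, (1 + 1/((n:ℝ)+1)) = (N:ℝ) + 1 := by
    intro N
    induction N with
    | zero => simp
    | succ N ih =>
      rw [prod_range_succ, ih]
      have hne : ((N:ℝ)+1) ≠ 0 := (hnpos N).ne'
      push_cast
      field_simp
  have hP : ∀ N : ℕ, ∏ n ∈ range N, a n
      = ((N:ℝ)+1)^x * ∏ n ∈ range N, (((n:ℝ)+1)/(x+(n:ℝ)+1)) := by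
    intro N
    rw [← tele N, ← Real.finset_prod_rpow _ _ (fun i _ => (hb i).le) x, ← prod_mul_distrib]
    apply prod_congr rfl
    intro n _
    rw [ha]
    simp only
    have h1 : (1 + x/((n:ℝ)+1)) = (x+(n:ℝ)+1)/((n:ℝ)+1) := by
      field_simp
      ring
    rw [h1, div_div_eq_mul_div, mul_div_assoc]
  -- relate to GammaSeq
  have hd : ∀ n : ℕ, (0:ℝ) < x + (n:ℝ) + 1 := by
    intro n
    have := Nat.cast_nonneg (α := ℝ) n
    linarith
  have hQG : ∀ N : ℕ, Real.GammaSeq (x+1) N * (x+1+N)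
      = (N:ℝ)^(x+1) * ∏ n ∈ range N, (((n:ℝ)+1)/(x+(n:ℝ)+1)) := by
    intro N
    rw [Real.GammaSeq, prod_range_succ]
    have hfac : ((N.factorial : ℕ) : ℝ) = ∏ n ∈ range N, ((n:ℝ)+1) := by
      rw [← Finset.prod_range_add_one_eq_factorial]
      push_cast
      rfl
    have hD : ∏ j ∈ range N, (x + 1 + (j:ℝ)) = ∏ n ∈ range N, (x+(n:ℝ)+1) :=
      prod_congr rfl fun n _ => by ring
    rw [hfac, hD, prod_div_distrib]
    have hDne : ∏ n ∈ range N, (x+(n:ℝ)+1) ≠ 0 :=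
      (prod_pos fun n _ => hd n).ne'
    have hlast : x + 1 + (N:ℝ) ≠ 0 := by have := hd N; intro h; apply this.ne'; linarith
    field_simp
  -- partial products tend to Gamma (x+1)
  have h1 : Tendsto (fun N : ℕ => 1 + 1/(N:ℝ)) atTop (𝓝 1) := by
    simpa using (tendsto_const_nhds (x := (1:ℝ))).add tendsto_one_div_atTop_nhds_zero_nat
  have h2 : Tendsto (fun N : ℕ => (1 + 1/(N:ℝ))^x) atTop (𝓝 1) := by
    simpa using h1.rpow_const (Or.inl one_ne_zero)
  have h3 : Tendsto (fun N : ℕ => (x+1)*(1/(N:ℝ)) + 1) atTop (𝓝 1) := by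
    simpa using (tendsto_one_div_atTop_nhds_zero_nat.const_mul (x+1)).add
      (tendsto_const_nhds : Tendsto (fun _ : ℕ => (1:ℝ)) atTop (𝓝 1))
  have hc1 : Tendsto (fun N : ℕ => ((N:ℝ)+1)^x * (x+1+N) / (N:ℝ)^(x+1)) atTop (𝓝 1) := by
    have h4 := h2.mul h3
    rw [one_mul] at h4
    apply h4.congr'
    filter_upwards [eventually_ge_atTop 1] with N hN
    have hN0 : (0:ℝ) < N := by exact_mod_cast hN
    have hNe : (N:ℝ) ≠ 0 := hN0.ne'
    have hxe : ((N:ℝ))^x ≠ 0 := (Real.rpow_pos_of_pos hN0 x).ne'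
    have h6 : (1 + 1/(N:ℝ)) = ((N:ℝ)+1)/(N:ℝ) := by field_simp
    rw [h6, Real.div_rpow (by positivity) hN0.le, Real.rpow_add hN0, Real.rpow_one]
    field_simp
  have hG := Real.GammaSeq_tendsto_Gamma (x+1)
  have h5 := hG.mul hc1
  rw [mul_one] at h5
  have hPt : Tendsto (fun N : ℕ => ∏ n ∈ range N, a n) atTop (𝓝 (Real.Gamma (x+1))) := by
    apply h5.congr'
    filter_upwards [eventually_ge_atTop 1] with N hN
    have hN0 : (0:ℝ) < N := by exact_mod_cast hN
    have hNx : (0:ℝ) < (N:ℝ)^(x+1) := Real.rpow_pos_of_pos hN0 _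
    have hQ : ∏ n ∈ range N, (((n:ℝ)+1)/(x+(n:ℝ)+1))
        = Real.GammaSeq (x+1) N * (x+1+N) / (N:ℝ)^(x+1) := by
      rw [eq_div_iff hNx.ne']
      linear_combination -hQG N
    rw [hP N, hQ]
    ring
  refine ⟨hprod.multipliable, ?_⟩
  rw [hprod.tprod_eq]
  exact tendsto_nhds_unique hPt hprod.tendsto_prod_nat
end

section
/- For every natural number m, the Wallis-type partial product ∏_{k=1}^{m} (2k−1)/(2k) equals the convergent infinite product ∏_{k=0}^∞ ( (2k+1)(2m+2k+2) ) / ( (2k+2)(2m+2k+1) ). -/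
/-!
With `r k = (2k+1)/(2k+2)`, the `k`-th factor is `r k / r (m+k)`, so the partial product over
`k < n` telescopes to `(∏_{k<m} r k) / ∏_{k<m} r (n+k)`, which tends to `∏_{k<m} r k` since
`r → 1`. Convergence of the infinite product follows from `|r k / r (m+k) - 1| ≤ m/(k+1)^2`.
-/

open Filter Finset Topology

theorem Finset.prod_range_div_shift {G₀ : Type*} [CommGroupWithZero G₀] (g : ℕ → G₀)
    (hg : ∀ k, g k ≠ 0) (m n : ℕ) :
    ∏ k ∈ range n, g k / g (m + k) = (∏ k ∈ range m, g k) / ∏ k ∈ range m, g (n + k) := by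
  have hprod : ∀ s : Finset ℕ, ∀ f : ℕ → ℕ, ∏ k ∈ s, g (f k) ≠ 0 :=
    fun s f => prod_ne_zero_iff.mpr fun k _ => hg (f k)
  rw [prod_div_distrib, div_eq_div_iff (hprod _ _) (hprod _ _), ← prod_range_add,
    ← prod_range_add, add_comm]

theorem tendsto_prod_range_div_shift {K : Type*} [CommGroupWithZero K] [TopologicalSpace K]
    [ContinuousMul K] [ContinuousInv₀ K] {g : ℕ → K} (hg : ∀ k, g k ≠ 0)
    (hlim : Tendsto g atTop (𝓝 1)) (m : ℕ) :
    Tendsto (fun n => ∏ k ∈ range n, g k / g (m + k)) atTop (𝓝 (∏ k ∈ range m, g k)) := by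
  have htail : Tendsto (fun n => ∏ k ∈ range m, g (n + k)) atTop (𝓝 1) := by
    simpa using tendsto_finsetProd (range m) fun k _ =>
      (tendsto_add_atTop_iff_nat k).mpr hlim
  simp_rw [prod_range_div_shift g hg]
  simpa only [div_one, Pi.div_def] using tendsto_const_nhds.div htail one_ne_zero

noncomputable def wallisRatio (k : ℕ) : ℝ := (2 * k + 1) / (2 * k + 2)

theorem wallisRatio_pos (k : ℕ) : 0 < wallisRatio k := by
  unfold wallisRatio; positivity

theorem tendsto_wallisRatio_atTop : Tendsto wallisRatio atTop (𝓝 1) := by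
  have h : wallisRatio = fun k : ℕ => 1 - 2⁻¹ * (1 / ((k : ℝ) + 1)) := funext fun k => by
    unfold wallisRatio; field_simp; ring
  simpa [h] using (tendsto_one_div_add_atTop_nhds_zero_nat.const_mul (2⁻¹ : ℝ)).const_sub 1

theorem wallisRatio_div_wallisRatio_add (m k : ℕ) :
    wallisRatio k / wallisRatio (m + k) =
      (2 * k + 1) * (2 * m + 2 * k + 2) / ((2 * k + 2) * (2 * m + 2 * k + 1)) := by
  unfold wallisRatio
  push_cast
  field_simp

theorem abs_wallisRatio_div_wallisRatio_add_sub_one_le (m k : ℕ) :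
    |wallisRatio k / wallisRatio (m + k) - 1| ≤ m / ((k : ℝ) + 1) ^ 2 := by
  have hden : (0 : ℝ) < (2 * k + 2) * (2 * m + 2 * k + 1) := by positivity
  have hsub : wallisRatio k / wallisRatio (m + k) - 1 =
      -(2 * m / ((2 * k + 2) * (2 * m + 2 * k + 1))) := by
    rw [wallisRatio_div_wallisRatio_add]; field_simp; ring
  rw [hsub, abs_neg, abs_of_nonneg (by positivity), div_le_div_iff₀ hden (by positivity)]
  have hm : (0 : ℝ) ≤ m := m.cast_nonneg
  have hk : (0 : ℝ) ≤ k := k.cast_nonneg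
  nlinarith [mul_nonneg hm (mul_nonneg hk hm), mul_nonneg hm hm, mul_nonneg hm hk]

theorem multipliable_wallisRatio_div_wallisRatio_add (m : ℕ) :
    Multipliable fun k => wallisRatio k / wallisRatio (m + k) := by
  have hsq : Summable fun k : ℕ => (m : ℝ) / ((k : ℝ) + 1) ^ 2 := by
    have := ((summable_nat_add_iff 1).mpr
      (Real.summable_one_div_nat_pow.mpr one_lt_two)).mul_left (m : ℝ)
    simpa [div_eq_mul_inv] using this
  simpa using multipliable_one_add_of_summable (R := ℝ)
    (f := fun k => wallisRatio k / wallisRatio (m + k) - 1)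
    (hsq.of_nonneg_of_le (fun _ => norm_nonneg _)
      (abs_wallisRatio_div_wallisRatio_add_sub_one_le m))

theorem prod_Icc_two_mul_sub_one_div_two_mul (m : ℕ) :
    ∏ k ∈ Icc 1 m, ((2 * (k : ℝ) - 1) / (2 * k)) = ∏ k ∈ range m, wallisRatio k := by
  induction m with
  | zero => simp
  | succ m ih =>
    rw [prod_Icc_succ_top (by omega), ih, prod_range_succ, wallisRatio]
    push_cast
    ring_nf

theorem wallis_partial_eq_tprod (m : ℕ) :
    Multipliable (fun k : ℕ =>
      ((2 * k + 1) * (2 * m + 2 * k + 2)) / ((2 * k + 2) * (2 * m + 2 * k + 1)) : ℕ → ℝ) ∧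
    ∏ k ∈ Finset.Icc 1 m, ((2 * (k : ℝ) - 1) / (2 * k)) =
      ∏' k : ℕ, (((2 * k + 1) * (2 * m + 2 * k + 2)) / ((2 * k + 2) * (2 * m + 2 * k + 1)) : ℝ) := by
  simp_rw [← wallisRatio_div_wallisRatio_add, prod_Icc_two_mul_sub_one_div_two_mul]
  have hmul := multipliable_wallisRatio_div_wallisRatio_add m
  refine ⟨hmul, tendsto_nhds_unique ?_ hmul.tendsto_prod_tprod_nat⟩
  exact tendsto_prod_range_div_shift (fun k => (wallisRatio_pos k).ne') tendsto_wallisRatio_atTop m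
end

section
/- Define W(x) = ∏_{k=0}^∞ ( (2k+1)(2x+2k+2) ) / ( (2k+2)(2x+2k+1) ) for real x > −1/2, which interpolates the products (1/2)(3/4)⋯((2m−1)/(2m)). Then W(0) = 1 and W has derivative −2·log 2 at x = 0. -/
/-!
Taking logarithms, `log W(x) = ∑ₖ log wₖ(x)` where the `k`-th factor has logarithmic derivative
`-2 / ((2x + 2k + 1)(2x + 2k + 2)) = O(1 / (k + 1)²)` uniformly near `0`, so the series may be
differentiated termwise. At `x = 0` every factor is `1`, and the derivative is `-2` times
`∑ₖ 1 / ((2k + 1)(2k + 2)) = ∑ₖ (1 / (2k + 1) - 1 / (2k + 2)) = log 2`, the alternating harmonic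
series, whose partial sums `H₂ₙ - Hₙ` tend to `log 2` because `Hₙ - log n` converges.
-/

open Real Filter Topology Finset

noncomputable def wallisFactor (k : ℕ) (x : ℝ) : ℝ :=
  ((2 * k + 1) * (2 * x + 2 * k + 2)) / ((2 * k + 2) * (2 * x + 2 * k + 1))

section WallisFactor

variable {k : ℕ} {x : ℝ}

lemma wallisFactor_zero (k : ℕ) : wallisFactor k 0 = 1 := by
  rw [wallisFactor, div_eq_one_iff_eq (by positivity)]
  ring

lemma wallisFactor_pos (hx : -(1 / 2) < x) : 0 < wallisFactor k x := by
  have hk : (0 : ℝ) ≤ k := k.cast_nonneg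
  have h₁ : 0 < 2 * x + 2 * k + 1 := by linarith
  have h₂ : 0 < 2 * x + 2 * k + 2 := by linarith
  unfold wallisFactor
  positivity

lemma hasDerivAt_log_wallisFactor (hx : -(1 / 2) < x) :
    HasDerivAt (fun y => log (wallisFactor k y))
      (-2 / ((2 * x + 2 * k + 1) * (2 * x + 2 * k + 2))) x := by
  have hk : (0 : ℝ) ≤ k := k.cast_nonneg
  have h₁ : 0 < 2 * x + 2 * k + 1 := by linarith
  have h₂ : 0 < 2 * x + 2 * k + 2 := by linarith
  have hlin (c : ℝ) : HasDerivAt (fun y : ℝ => 2 * y + 2 * k + c) 2 x := by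
    simpa using (((hasDerivAt_id x).const_mul 2).add_const (2 * (k : ℝ))).add_const c
  have hw := (((hlin 2).const_mul (2 * (k : ℝ) + 1)).fun_div
    ((hlin 1).const_mul (2 * (k : ℝ) + 2)) (by positivity)).log (wallisFactor_pos hx).ne'
  refine hw.congr_deriv ?_
  field_simp
  ring

lemma norm_deriv_log_wallisFactor_le (hx : -(1 / 4) < x) :
    ‖-2 / ((2 * x + 2 * k + 1) * (2 * x + 2 * k + 2))‖ ≤ 4 / ((k : ℝ) + 1) ^ 2 := by
  have hk : (0 : ℝ) ≤ k := k.cast_nonneg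
  have h₁ : ((k : ℝ) + 1) / 2 ≤ 2 * x + 2 * k + 1 := by linarith
  have h₂ : (k : ℝ) + 1 ≤ 2 * x + 2 * k + 2 := by linarith
  have hprod := mul_le_mul h₁ h₂ (by positivity) (by linarith)
  have hpos : 0 < ((k : ℝ) + 1) / 2 * ((k : ℝ) + 1) := by positivity
  rw [norm_div, norm_neg, Real.norm_two, Real.norm_of_nonneg (by linarith),
    div_le_div_iff₀ (by linarith) (by positivity)]
  linarith

lemma summable_four_div_succ_sq : Summable (fun k : ℕ => 4 / ((k : ℝ) + 1) ^ 2) := by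
  have := ((summable_nat_add_iff 1).mpr (summable_one_div_nat_pow.mpr one_lt_two)).mul_left 4
  simpa [div_eq_mul_inv] using this

lemma summable_log_wallisFactor (hx : -(1 / 4) < x) :
    Summable (fun k => log (wallisFactor k x)) :=
  summable_of_summable_hasDerivAt_of_isPreconnected (g := fun k y => log (wallisFactor k y))
    summable_four_div_succ_sq isOpen_Ioi isPreconnected_Ioi
    (fun _ _ hy => hasDerivAt_log_wallisFactor (by linarith [hy.out]))
    (fun _ _ hy => norm_deriv_log_wallisFactor_le hy) (y₀ := 0) (by norm_num)
    (by simp [wallisFactor_zero]) hx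

lemma hasDerivAt_tsum_log_wallisFactor (hx : -(1 / 4) < x) :
    HasDerivAt (fun y => ∑' k, log (wallisFactor k y))
      (∑' k : ℕ, -2 / ((2 * x + 2 * k + 1) * (2 * x + 2 * k + 2))) x :=
  hasDerivAt_tsum_of_isPreconnected summable_four_div_succ_sq isOpen_Ioi isPreconnected_Ioi
    (fun _ _ hy => hasDerivAt_log_wallisFactor (by linarith [hy.out]))
    (fun _ _ hy => norm_deriv_log_wallisFactor_le hy) (y₀ := 0) (by norm_num)
    (by simp [wallisFactor_zero]) hx

lemma tprod_wallisFactor_eq_exp (hx : -(1 / 4) < x) :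
    ∏' k, wallisFactor k x = exp (∑' k, log (wallisFactor k x)) :=
  (rexp_tsum_eq_tprod (fun _ => wallisFactor_pos (by linarith))
    (summable_log_wallisFactor hx)).symm

end WallisFactor

lemma sum_range_one_div_odd_mul_even (n : ℕ) :
    ∑ k ∈ range n, 1 / ((2 * k + 1) * (2 * k + 2) : ℝ) = harmonic (2 * n) - harmonic n := by
  induction n with
  | zero => simp
  | succ n ih =>
    rw [sum_range_succ, ih, show 2 * (n + 1) = 2 * n + 1 + 1 by ring,
      harmonic_succ, harmonic_succ, harmonic_succ]
    push_cast
    field_simp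
    ring

lemma hasSum_one_div_odd_mul_even :
    HasSum (fun k : ℕ => 1 / ((2 * k + 1) * (2 * k + 2) : ℝ)) (log 2) := by
  rw [hasSum_iff_tendsto_nat_of_nonneg (fun _ => by positivity)]
  simp_rw [sum_range_one_div_odd_mul_even]
  -- `H₂ₙ - Hₙ = (H₂ₙ - log 2n) - (Hₙ - log n) + log 2`, and both brackets tend to `γ`.
  have hγ := ((tendsto_harmonic_sub_log.comp (tendsto_id.const_mul_atTop' two_pos)).sub
    tendsto_harmonic_sub_log).add_const (log 2)
  rw [sub_self, zero_add] at hγ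
  refine hγ.congr' ?_
  filter_upwards [eventually_ne_atTop 0] with n hn
  simp only [Function.comp_apply, id, Nat.cast_mul, Nat.cast_ofNat]
  rw [log_mul two_ne_zero (by exact_mod_cast hn)]
  ring

theorem wallis_interpolation_deriv :
    (∏' k : ℕ, (((2 * k + 1) * (2 * (0 : ℝ) + 2 * k + 2)) /
      ((2 * k + 2) * (2 * (0 : ℝ) + 2 * k + 1)))) = 1 ∧
    HasDerivAt (fun x : ℝ => ∏' k : ℕ,
        (((2 * k + 1) * (2 * x + 2 * k + 2)) / ((2 * k + 2) * (2 * x + 2 * k + 1)) : ℝ))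
      (-2 * Real.log 2) 0 := by
  change ∏' k, wallisFactor k 0 = 1 ∧ HasDerivAt (fun x => ∏' k, wallisFactor k x) _ 0
  have hlog₀ : ∑' k, log (wallisFactor k 0) = 0 := by simp [wallisFactor_zero]
  have hderiv₀ : ∑' k : ℕ, -2 / ((2 * 0 + 2 * k + 1) * (2 * 0 + 2 * k + 2) : ℝ) = -2 * log 2 := by
    rw [← (hasSum_one_div_odd_mul_even.mul_left (-2)).tsum_eq]
    simp [div_eq_mul_inv]
  refine ⟨by simp [wallisFactor_zero], ?_⟩
  have hexp := (hasDerivAt_tsum_log_wallisFactor (x := 0) (by norm_num)).exp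
  rw [hlog₀, hderiv₀, exp_zero, one_mul] at hexp
  refine hexp.congr_of_eventuallyEq ?_
  filter_upwards [Ioi_mem_nhds (by norm_num : -(1 / 4 : ℝ) < 0)] with x hx
  exact tprod_wallisFactor_eq_exp hx
end

section
/- For every real x with |x| < 1: ∑_{k=0}^∞ 1/((2x+2k+1)(2x+2k+2)) = log 2 − 2x·η(2) + 4x^2·η(3) − 8x^3·η(4) + ⋯ , i.e. it equals log 2 + ∑_{j=0}^∞ (−1)^{j+1} · 2^{j+1} · x^{j+1} · η(j+2), where η(s) = ∑_{n=0}^∞ (−1)^n/(n+1)^s. -/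
open Filter Finset Real Topology

private lemma aux_summable_inv_sq_odd : Summable (fun m : ℕ => (1 : ℝ) / (2 * m + 1) ^ 2) := by
  have h : Summable (fun n : ℕ => 1 / ((n : ℝ) + 1) ^ 2) := by
    have := (summable_nat_add_iff 1).mpr (Real.summable_one_div_nat_pow.mpr one_lt_two)
    exact this.congr fun n => by push_cast; ring
  refine h.of_nonneg_of_le (fun m => by positivity) fun m => ?_
  apply one_div_le_one_div_of_le (by positivity)
  nlinarith [Nat.cast_nonneg (α := ℝ) m]

private lemma aux_partial_pairs (N : ℕ) :
    ∑ m ∈ range N, ((1 : ℝ) / (2 * m + 1) - 1 / (2 * m + 2)) =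
      (harmonic (2 * N) : ℝ) - harmonic N := by
  induction N with
  | zero => simp
  | succ n ih =>
    rw [Finset.sum_range_succ, ih, show 2 * (n + 1) = (2 * n + 1) + 1 by ring,
      harmonic_succ, harmonic_succ, harmonic_succ]
    push_cast
    have h1 : (2 * (n : ℝ) + 1) ≠ 0 := by positivity
    have h2 : (2 * (n : ℝ) + 2) ≠ 0 := by positivity
    have h3 : ((n : ℝ) + 1) ≠ 0 := by positivity
    field_simp
    ring

private lemma aux_hasSum_log_two :
    HasSum (fun m : ℕ => (1 : ℝ) / (2 * m + 1) - 1 / (2 * m + 2)) (Real.log 2) := by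
  have hsum : Summable (fun m : ℕ => (1 : ℝ) / (2 * m + 1) - 1 / (2 * m + 2)) := by
    refine aux_summable_inv_sq_odd.of_nonneg_of_le (fun m => ?_) (fun m => ?_)
    · have h1 : (0:ℝ) < 2 * m + 1 := by positivity
      rw [sub_nonneg]
      apply one_div_le_one_div_of_le h1
      linarith
    · have h1 : (0:ℝ) < 2 * m + 1 := by positivity
      have h2 : (0:ℝ) < 2 * m + 2 := by positivity
      have heq : (1 : ℝ) / (2 * m + 1) - 1 / (2 * m + 2) = 1 / ((2 * m + 1) * (2 * m + 2)) := by
        field_simp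
        ring
      rw [heq]
      apply one_div_le_one_div_of_le (by positivity)
      nlinarith
  rw [hsum.hasSum_iff_tendsto_nat]
  have key : (fun N : ℕ => ∑ m ∈ range N, ((1 : ℝ) / (2 * m + 1) - 1 / (2 * m + 2)))
      = fun N : ℕ => (harmonic (2 * N) : ℝ) - harmonic N := funext aux_partial_pairs
  rw [key]
  have h2 : Tendsto (fun n : ℕ => 2 * n) atTop atTop :=
    tendsto_atTop_atTop_of_monotone (fun a b h => by omega) (fun b => ⟨b, by omega⟩)
  have hA : Tendsto (fun n : ℕ => (harmonic (2 * n) : ℝ) - Real.log (2 * n)) atTop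
      (𝓝 Real.eulerMascheroniConstant) := by
    have h3 := Real.tendsto_harmonic_sub_log.comp h2
    refine h3.congr fun n => ?_
    simp only [Function.comp_apply]
    push_cast
    ring
  have hB := Real.tendsto_harmonic_sub_log
  have hC := (hA.sub hB).add_const (Real.log 2)
  rw [sub_self, zero_add] at hC
  apply hC.congr'
  filter_upwards [eventually_gt_atTop 0] with n hn
  have hn' : (0:ℝ) < n := by exact_mod_cast hn
  have hlog : Real.log (2 * (n:ℝ)) = Real.log 2 + Real.log n :=
    Real.log_mul (by norm_num) hn'.ne'
  rw [hlog]
  ring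

private lemma aux_hasSum_geom {r c : ℝ} (hr : |r| < 1) (hc : 1 ≤ c) :
    HasSum (fun i : ℕ => (-r) ^ i / c ^ (i + 1)) (1 / (c + r)) := by
  have hc0 : (0 : ℝ) < c := lt_of_lt_of_le one_pos hc
  have hrc : |r| < c := lt_of_lt_of_le hr hc
  have hcr : 0 < c + r := by
    have h1 := neg_abs_le r
    linarith
  have hnorm : ‖-r / c‖ < 1 := by
    rw [Real.norm_eq_abs, abs_div, abs_neg, abs_of_pos hc0, div_lt_one hc0]
    exact hrc
  have hgeo := (hasSum_geometric_of_norm_lt_one hnorm).mul_left (1 / c)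
  have heq : (fun i : ℕ => 1 / c * (-r / c) ^ i) = fun i : ℕ => (-r) ^ i / c ^ (i + 1) := by
    funext i
    rw [div_pow, pow_succ]
    ring
  rw [heq] at hgeo
  convert hgeo using 1
  · rfl
  have h1 : (1 : ℝ) - -r / c = (c + r) / c := by
    field_simp
    ring
  rw [h1, inv_div]
  field_simp

private lemma aux_hasSum_row {r : ℝ} (hr : |r| < 1) (m : ℕ) :
    HasSum (fun i : ℕ => (-r) ^ i * ((1:ℝ) / (2 * m + 1) ^ (i + 1) - 1 / (2 * m + 2) ^ (i + 1)))
      (1 / ((r + (2 * m + 1)) * (r + (2 * m + 2)))) := by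
  have hm : (0:ℝ) ≤ m := Nat.cast_nonneg m
  have ha := aux_hasSum_geom (c := (2 * m + 1 : ℝ)) hr (by linarith)
  have hb := aux_hasSum_geom (c := (2 * m + 2 : ℝ)) hr (by linarith)
  have h := ha.sub hb
  have habs := neg_abs_le r
  have hra : (0:ℝ) < (2 * m + 1 : ℝ) + r := by linarith
  have hrb : (0:ℝ) < (2 * m + 2 : ℝ) + r := by linarith
  have heq : (fun i : ℕ => (-r) ^ i / (2 * m + 1 : ℝ) ^ (i + 1) -
        (-r) ^ i / (2 * m + 2 : ℝ) ^ (i + 1))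
      = fun i : ℕ => (-r) ^ i * ((1:ℝ) / (2 * m + 1) ^ (i + 1) - 1 / (2 * m + 2) ^ (i + 1)) := by
    funext i
    ring
  rw [heq] at h
  convert h using 1
  · rfl
  rw [div_sub_div _ _ hra.ne' hrb.ne', div_eq_div_iff
    (by exact (mul_pos (by linarith) (by linarith)).ne') (mul_pos hra hrb).ne']
  ring

private lemma aux_hasSum_eta_pairs {s : ℕ} (hs : 1 ≤ s) :
    HasSum (fun m : ℕ => (1:ℝ) / (2 * m + 1) ^ (s + 1) - 1 / (2 * m + 2) ^ (s + 1))
      (∑' n : ℕ, (-1) ^ n / ((n : ℝ) + 1) ^ (s + 1)) := by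
  set h : ℕ → ℝ := fun n => (-1) ^ n / ((n : ℝ) + 1) ^ (s + 1) with hh
  have hsum : Summable h := by
    have hb : Summable (fun n : ℕ => 1 / ((n : ℝ) + 1) ^ 2) := by
      have := (summable_nat_add_iff 1).mpr (Real.summable_one_div_nat_pow.mpr one_lt_two)
      exact this.congr fun n => by push_cast; ring
    refine hb.of_norm_bounded fun n => ?_
    have h1 : (1:ℝ) ≤ (n:ℝ) + 1 := by
      have : (0:ℝ) ≤ n := Nat.cast_nonneg n
      linarith
    rw [hh, Real.norm_eq_abs, abs_div, abs_pow, abs_neg, abs_one, one_pow,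
      abs_of_pos (by positivity : (0:ℝ) < ((n:ℝ)+1)^(s+1))]
    apply one_div_le_one_div_of_le (by positivity)
    exact pow_le_pow_right₀ h1 (by omega)
  have he : Summable (fun k : ℕ => h (2 * k)) :=
    hsum.comp_injective fun a b hab => by omega
  have ho : Summable (fun k : ℕ => h (2 * k + 1)) :=
    hsum.comp_injective fun a b hab => by omega
  have hs2 := he.hasSum.add ho.hasSum
  rw [tsum_even_add_odd he ho] at hs2
  have hpair : (fun k : ℕ => h (2 * k) + h (2 * k + 1))
      = fun m : ℕ => (1:ℝ) / (2 * m + 1) ^ (s + 1) - 1 / (2 * m + 2) ^ (s + 1) := by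
    funext k
    have e1 : ((-1:ℝ)) ^ (2 * k) = 1 := by
      rw [pow_mul]; norm_num
    have e2 : ((-1:ℝ)) ^ (2 * k + 1) = -1 := by
      rw [pow_succ, e1]; ring
    simp only [hh]
    push_cast
    rw [e1, e2]
    ring
  rwa [hpair] at hs2

private lemma aux_summable_prod {r : ℝ} (hr : |r| < 1) :
    Summable (fun p : ℕ × ℕ =>
      (-r) ^ p.2 * ((1:ℝ) / (2 * p.1 + 1) ^ (p.2 + 1) - 1 / (2 * p.1 + 2) ^ (p.2 + 1))) := by
  have hsum2 : Summable (fun i : ℕ => ((i:ℝ) + 1) * |r| ^ i) := by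
    have h1 : Summable (fun i : ℕ => ((i:ℝ)) * |r| ^ i) := by
      simpa using summable_pow_mul_geometric_of_norm_lt_one 1
        (r := |r|) (by rwa [Real.norm_eq_abs, abs_abs])
    have h2 : Summable (fun i : ℕ => |r| ^ i) :=
      summable_geometric_of_lt_one (abs_nonneg r) hr
    exact (h1.add h2).congr fun i => by ring
  have hg : Summable (fun p : ℕ × ℕ =>
      ((1:ℝ) / (2 * p.1 + 1) ^ 2) * (((p.2:ℝ) + 1) * |r| ^ p.2)) :=
    aux_summable_inv_sq_odd.mul_of_nonneg hsum2 (fun m => by positivity) (fun i => by positivity)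
  refine hg.of_norm_bounded fun p => ?_
  obtain ⟨m, i⟩ := p
  have hm : (0:ℝ) ≤ m := Nat.cast_nonneg m
  set a : ℝ := 2 * m + 1 with ha
  set b : ℝ := 2 * m + 2 with hb
  have ha1 : (1:ℝ) ≤ a := by rw [ha]; linarith
  have ha0 : (0:ℝ) < a := by linarith
  have hb0 : (0:ℝ) < b := by rw [hb]; linarith
  have hab : a ≤ b := by rw [ha, hb]; linarith
  have hba : b - a = 1 := by rw [ha, hb]; ring
  have hdiff_nonneg : (0:ℝ) ≤ 1 / a ^ (i + 1) - 1 / b ^ (i + 1) := by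
    rw [sub_nonneg]
    apply one_div_le_one_div_of_le (by positivity)
    exact pow_le_pow_left₀ ha0.le hab _
  have hber := one_add_mul_le_pow (a := a / b - 1) (by
      have hpos : (0:ℝ) < a / b := by positivity
      linarith) (i + 1)
  have hab1 : (1 : ℝ) + (a / b - 1) = a / b := by ring
  rw [hab1] at hber
  push_cast at hber
  have h1b : (1:ℝ) - a / b = 1 / b := by
    rw [eq_div_iff hb0.ne', sub_mul, one_mul, div_mul_cancel₀ _ hb0.ne']
    linarith
  have hber' : 1 - (a / b) ^ (i + 1) ≤ ((i:ℝ) + 1) * (1 / b) := by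
    have e : ((i:ℝ) + 1) * (1 / b) = -(((i:ℝ) + 1) * (a / b - 1)) := by
      rw [← h1b]; ring
    rw [e]
    linarith [hber]
  have ha' : a ^ (i + 1) ≠ 0 := pow_ne_zero _ ha0.ne'
  have hb' : b ^ (i + 1) ≠ 0 := pow_ne_zero _ hb0.ne'
  have hsplit : (a / b) ^ (i + 1) / a ^ (i + 1) = 1 / b ^ (i + 1) := by
    rw [div_pow, div_div, mul_comm, ← div_div, div_self ha']
  have hdiff_eq : 1 / a ^ (i + 1) - 1 / b ^ (i + 1)
      = (1 / a ^ (i + 1)) * (1 - (a / b) ^ (i + 1)) := by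
    rw [mul_sub, mul_one, one_div, inv_mul_eq_div, hsplit, one_div]
  have hpow_a : a ≤ a ^ (i + 1) := by
    calc a = a ^ 1 := (pow_one a).symm
    _ ≤ a ^ (i + 1) := pow_le_pow_right₀ ha1 (by omega)
  have hdiff_le : 1 / a ^ (i + 1) - 1 / b ^ (i + 1) ≤ ((i:ℝ) + 1) / a ^ 2 := by
    rw [hdiff_eq]
    have step1 : (1 / a ^ (i + 1)) * (1 - (a / b) ^ (i + 1))
        ≤ (1 / a ^ (i + 1)) * (((i:ℝ) + 1) * (1 / b)) :=
      mul_le_mul_of_nonneg_left hber' (by positivity)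
    refine step1.trans ?_
    rw [div_mul_eq_mul_div, one_mul, mul_one_div, div_div,
      div_le_div_iff₀ (by positivity) (by positivity)]
    have hkey : a ^ 2 ≤ b * a ^ (i + 1) := by
      calc a ^ 2 = a * a := sq a
      _ ≤ b * a ^ (i + 1) := mul_le_mul hab hpow_a ha0.le hb0.le
    have : (0:ℝ) ≤ (i:ℝ) + 1 := by positivity
    exact mul_le_mul_of_nonneg_left hkey this
  rw [Real.norm_eq_abs, abs_mul, abs_pow, abs_neg, abs_of_nonneg hdiff_nonneg]
  calc |r| ^ i * (1 / a ^ (i + 1) - 1 / b ^ (i + 1))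
      ≤ |r| ^ i * (((i:ℝ) + 1) / a ^ 2) :=
        mul_le_mul_of_nonneg_left hdiff_le (by positivity)
    _ = (1 / a ^ 2) * (((i:ℝ) + 1) * |r| ^ i) := by ring

theorem tsum_inv_prod_eq_eta_series (x : ℝ) (hx : |x| < 1 / 2) :
    (∑' k : ℕ, (1 / ((2 * x + 2 * k + 1) * (2 * x + 2 * k + 2)) : ℝ)) =
      Real.log 2 + ∑' j : ℕ, (-1) ^ (j + 1) * 2 ^ (j + 1) * x ^ (j + 1) *
        ∑' n : ℕ, ((-1) ^ n / (n + 1) ^ (j + 2) : ℝ) := by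
  set r : ℝ := 2 * x with hrdef
  have hr : |r| < 1 := by
    rw [hrdef, abs_mul, abs_two]
    linarith
  set f : ℕ → ℕ → ℝ := fun m i =>
    (-r) ^ i * ((1:ℝ) / (2 * m + 1) ^ (i + 1) - 1 / (2 * m + 2) ^ (i + 1)) with hf
  have hF : Summable (Function.uncurry f) := aux_summable_prod hr
  -- Step 1: LHS = double sum.
  have step1 : (∑' k : ℕ, (1 / ((2 * x + 2 * k + 1) * (2 * x + 2 * k + 2)) : ℝ))
      = ∑' m, ∑' i, f m i := by
    refine tsum_congr fun m => ?_
    have h := (aux_hasSum_row hr m).tsum_eq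
    simp only [hf]
    rw [h, hrdef]
    ring_nf
  -- Step 2: swap order of summation.
  have step2 : ∑' m, ∑' i, f m i = ∑' i, ∑' m, f m i := (Summable.tsum_comm hF).symm
  have houter : Summable (fun i => ∑' m, f m i) := hF.prod_symm.prod
  -- Step 3: split off the i = 0 term.
  have step3 : ∑' i, ∑' m, f m i = (∑' m, f m 0) + ∑' j, ∑' m, f m (j + 1) :=
    Summable.tsum_eq_zero_add houter
  -- The i = 0 term is log 2.
  have hzero : (∑' m, f m 0) = Real.log 2 := by
    have hfun : (fun m : ℕ => f m 0)
        = fun m : ℕ => (1 : ℝ) / (2 * m + 1) - 1 / (2 * m + 2) := by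
      funext m
      simp only [hf]
      norm_num
    rw [hfun, aux_hasSum_log_two.tsum_eq]
  -- The remaining terms.
  have hterm : ∀ j : ℕ, (∑' m, f m (j + 1)) =
      (-1) ^ (j + 1) * 2 ^ (j + 1) * x ^ (j + 1) *
        ∑' n : ℕ, ((-1) ^ n / ((n : ℝ) + 1) ^ (j + 2) : ℝ) := by
    intro j
    have hps := aux_hasSum_eta_pairs (s := j + 1) (by omega)
    have h1 : HasSum (fun m => f m (j + 1))
        ((-r) ^ (j + 1) * ∑' n : ℕ, (-1) ^ n / ((n : ℝ) + 1) ^ (j + 1 + 1)) := by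
      simpa only [hf] using hps.mul_left ((-r) ^ (j + 1))
    rw [h1.tsum_eq]
    have hnr : ((-r) : ℝ) ^ (j + 1) = (-1) ^ (j + 1) * 2 ^ (j + 1) * x ^ (j + 1) := by
      rw [hrdef, show (-(2 * x) : ℝ) = (-1) * 2 * x by ring, mul_pow, mul_pow]
    rw [hnr]
  rw [step1, step2, step3, hzero]
  congr 1
  exact tsum_congr hterm
end

section
/- For every real x > −1, the function y ↦ log Γ(y+1) has derivative −γ + ∑_{n=0}^∞ x/((n+1)(n+1+x)) at x. -/
open Filter Topology Real Set Finset

theorem hasDerivAt_log_gamma (x : ℝ) (hx : -1 < x) :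
    HasDerivAt (fun y : ℝ => Real.log (Real.Gamma (y + 1)))
      (-Real.eulerMascheroniConstant +
        ∑' n : ℕ, x / ((n + 1) * (n + 1 + x))) x := by
  set γ := Real.eulerMascheroniConstant
  set F : ℕ → ℝ → ℝ := fun n y => Real.BohrMollerup.logGammaSeq (y + 1) n with hF
  set F' : ℕ → ℝ → ℝ := fun n y =>
    (Real.log n - (harmonic (n + 1) : ℝ)) +
      ∑ m ∈ Finset.range (n + 1), y / ((m + 1) * (m + 1 + y)) with hF'
  set g' : ℝ → ℝ := fun y => -γ + ∑' n : ℕ, y / ((n + 1) * (n + 1 + y)) with hg'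
  have key : ∀ y ∈ Ioi (-1 : ℝ), ∀ n : ℕ, HasDerivAt (F n) (F' n y) y := by
    intro y hy n
    have hy1 : (0 : ℝ) < y + 1 := by have := Set.mem_Ioi.mp hy; linarith
    have hpos : ∀ m : ℕ, (0 : ℝ) < y + 1 + m := fun m => by positivity
    have h1 : HasDerivAt (fun z : ℝ => (z + 1) * Real.log n + Real.log (Nat.factorial n))
        (Real.log n) y := by
      simpa using (((hasDerivAt_id y).add_const 1).mul_const (Real.log n)).add_const
        (Real.log (Nat.factorial n))
    have h2 : HasDerivAt (fun z : ℝ => ∑ m ∈ Finset.range (n + 1), Real.log (z + 1 + m))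
        (∑ m ∈ Finset.range (n + 1), 1 / (y + 1 + m)) y := by
      refine HasDerivAt.fun_sum fun m _ => ?_
      have := ((hasDerivAt_id y).add_const (1 + (m : ℝ))).log (by
        intro h; simp only [id_eq] at h; have := hpos m; linarith)
      simpa [add_assoc] using this
    have h3 := h1.sub h2
    have heq : F' n y = Real.log n - ∑ m ∈ Finset.range (n + 1), 1 / (y + 1 + m) := by
      have hharm : (harmonic (n + 1) : ℝ) = ∑ m ∈ Finset.range (n + 1), 1 / ((m : ℝ) + 1) := by
        rw [harmonic]; push_cast; simp [one_div]
      simp only [hF']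
      rw [hharm, sub_add, ← Finset.sum_sub_distrib]
      congr 1
      refine Finset.sum_congr rfl fun m _ => ?_
      have h4 : ((m : ℝ) + 1) ≠ 0 := by positivity
      have h5 : (y + 1 + (m : ℝ)) ≠ 0 := (hpos m).ne'
      have h6 : ((m : ℝ) + 1 + y) ≠ 0 := by intro h; apply h5; linarith
      field_simp
      ring
    rw [heq]
    simp only [hF, Real.BohrMollerup.logGammaSeq]
    exact h3
  have hconst : Tendsto (fun n : ℕ => Real.log n - (harmonic (n + 1) : ℝ)) atTop (𝓝 (-γ)) := by
    have h1 : Tendsto (fun n : ℕ => (harmonic (n + 1) : ℝ) - Real.log ((n : ℝ) + 1)) atTop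
        (𝓝 γ) := by
      have h0 := Real.tendsto_harmonic_sub_log.comp (tendsto_add_atTop_nat 1)
      refine h0.congr fun n => ?_
      simp only [Function.comp_apply]
      push_cast
      ring
    have h2 := Real.tendsto_log_nat_add_one_sub_log
    have h3 := (h1.add h2).neg
    rw [add_zero] at h3
    exact h3.congr fun n => by ring
  have hulocal : TendstoLocallyUniformlyOn F' g' atTop (Ioi (-1 : ℝ)) := by
    rw [tendstoLocallyUniformlyOn_iff_forall_isCompact isOpen_Ioi]
    intro K hK hKc
    rcases K.eq_empty_or_nonempty with rfl | hne
    · simp [TendstoUniformlyOn]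
    · set a := sInf K with ha
      set b := sSup K with hb
      have haK : a ∈ K := hKc.sInf_mem hne
      have ha1 : -1 < a := hK haK
      have hmem : ∀ y ∈ K, a ≤ y ∧ y ≤ b := fun y hy =>
        ⟨csInf_le hKc.bddBelow hy, le_csSup hKc.bddAbove hy⟩
      set c : ℝ := min 1 (1 + a) with hc
      have hc0 : 0 < c := lt_min one_pos (by linarith)
      set M : ℝ := max |a| |b| with hM
      have hsum : TendstoUniformlyOn
          (fun N => fun y : ℝ => ∑ m ∈ Finset.range N, y / ((m + 1) * (m + 1 + y)))
          (fun y : ℝ => ∑' m : ℕ, y / ((m + 1) * (m + 1 + y))) atTop K := by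
        refine tendstoUniformlyOn_tsum_nat
          (f := fun (m : ℕ) (y : ℝ) => y / ((m + 1) * (m + 1 + y)))
          (u := fun m => M / (c * ((m : ℝ) + 1) ^ 2)) ?_ ?_
        · have h0 : Summable fun n : ℕ => 1 / (n : ℝ) ^ 2 :=
            Real.summable_one_div_nat_pow.mpr one_lt_two
          have h1 : Summable fun m : ℕ => 1 / ((m : ℝ) + 1) ^ 2 := by
            have := (summable_nat_add_iff 1).mpr h0
            simpa using this
          refine (h1.mul_left (M / c)).congr fun m => ?_
          rw [div_mul_div_comm, mul_one]
        · intro m y hyK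
          obtain ⟨hay, hyb⟩ := hmem y hyK
          have hyM : |y| ≤ M := abs_le.mpr
            ⟨by have h7 := neg_abs_le a; have h8 := le_max_left |a| |b|; rw [hM]; linarith,
             by have h7 := le_abs_self b; have h8 := le_max_right |a| |b|; rw [hM]; linarith⟩
          have hlow : c * (m + 1) ≤ m + 1 + y := by
            have hc1 : c ≤ 1 := min_le_left _ _
            have hc2 : c ≤ 1 + a := min_le_right _ _
            have hm0 : (0 : ℝ) ≤ m := Nat.cast_nonneg m
            nlinarith
          have hden : 0 < ((m : ℝ) + 1) * (m + 1 + y) := by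
            have hcc : (0 : ℝ) < c * (m + 1) := by positivity
            have h2 : (0 : ℝ) < (m : ℝ) + 1 + y := lt_of_lt_of_le hcc hlow
            positivity
          rw [Real.norm_eq_abs, abs_div, abs_of_pos hden]
          show |y| / (((m : ℝ) + 1) * ((m : ℝ) + 1 + y)) ≤ M / (c * ((m : ℝ) + 1) ^ 2)
          rw [div_le_div_iff₀ hden (by positivity)]
          calc |y| * (c * ((m : ℝ) + 1) ^ 2) = |y| * (((m : ℝ) + 1) * (c * ((m : ℝ) + 1))) := by
                ring
            _ ≤ M * (((m : ℝ) + 1) * ((m : ℝ) + 1 + y)) := by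
                refine mul_le_mul hyM ?_ (by positivity) ((abs_nonneg a).trans (le_max_left _ _))
                exact mul_le_mul_of_nonneg_left hlow (by positivity)
      exact (hconst.tendstoUniformlyOn_const K).add
        (fun v hv => (tendsto_add_atTop_nat 1).eventually (hsum v hv))
  refine hasDerivAt_of_tendstoLocallyUniformlyOn isOpen_Ioi hulocal
    (Filter.Eventually.of_forall fun n y hy => key y hy n) ?_ (by simpa using hx)
  intro y hy
  have hy1 : (0 : ℝ) < y + 1 := by have := Set.mem_Ioi.mp hy; linarith
  exact Real.BohrMollerup.tendsto_log_gamma hy1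
end

section
/- For every real x with |x| < 1: log Γ(x+1) = −γ·x + ∑_{k=0}^∞ (−1)^k · ζ(k+2) · x^{k+2}/(k+2), where ζ(s) = ∑_{n=0}^∞ 1/(n+1)^s. -/
open Filter Finset Real Topology

private lemma hasSum_log_aux {t : ℝ} (ht : |t| < 1) :
    HasSum (fun k : ℕ => (-1) ^ k * t ^ (k + 2) / (k + 2)) (t - Real.log (1 + t)) := by
  have h := Real.hasSum_pow_div_log_of_abs_lt_one (x := -t) (by rwa [abs_neg])
  rw [sub_neg_eq_add] at h
  have h2 : HasSum (fun n : ℕ => (-t) ^ (n + 1 + 1) / ((n + 1 : ℕ) + 1))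
      (t - Real.log (1 + t)) := by
    apply (hasSum_nat_add_iff (f := fun n : ℕ => (-t) ^ (n + 1) / ((n : ℝ) + 1)) 1).mpr
    convert h using 1
    · rfl
    simp
    ring
  have hfun : (fun n : ℕ => (-t) ^ (n + 1 + 1) / (((n + 1 : ℕ) : ℝ) + 1)) =
      fun k : ℕ => (-1) ^ k * t ^ (k + 2) / (k + 2) := by
    funext k
    have h1 : (-t) ^ (k + 1 + 1) = (-1) ^ k * t ^ (k + 2) := by
      rw [show k + 1 + 1 = k + 2 from rfl, neg_pow, pow_add]
      ring_nf
    rw [h1]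
    push_cast
    ring_nf
  rwa [hfun] at h2

set_option maxHeartbeats 1000000 in
theorem log_gamma_zeta_series (x : ℝ) (hx : |x| < 1) :
    Real.log (Real.Gamma (x + 1)) =
      -Real.eulerMascheroniConstant * x +
        ∑' k : ℕ, (-1) ^ k * (∑' n : ℕ, (1 / (n + 1) ^ (k + 2) : ℝ)) * x ^ (k + 2) / (k + 2) := by
  obtain ⟨hxl, hxu⟩ := abs_lt.mp hx
  have hx1 : (0:ℝ) < x + 1 := by linarith
  set f : ℕ → ℝ := fun j => x / ((j:ℝ) + 1) - Real.log (1 + x / ((j:ℝ) + 1)) with hf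
  have htj : ∀ j : ℕ, |x / ((j:ℝ) + 1)| < 1 := by
    intro j
    rw [abs_div, abs_of_pos (show (0:ℝ) < (j:ℝ) + 1 by positivity)]
    exact lt_of_le_of_lt
      (div_le_self (abs_nonneg x) ((le_add_iff_nonneg_left 1).mpr (Nat.cast_nonneg j))) hx
  set a : ℕ × ℕ → ℝ :=
    fun p => ((-1) ^ p.2 * x ^ (p.2 + 2) / ((p.2:ℝ) + 2)) * (1 / ((p.1:ℝ) + 1)) ^ (p.2 + 2)
    with ha_def
  have hA : ∀ j : ℕ, HasSum (fun k => a (j, k)) (f j) := by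
    intro j
    have h := hasSum_log_aux (htj j)
    have : (fun k : ℕ => (-1) ^ k * (x / ((j:ℝ) + 1)) ^ (k + 2) / ((k:ℝ) + 2)) =
        fun k => a (j, k) := by
      funext k
      simp only [ha_def, div_pow, one_pow]
      ring
    rwa [this] at h
  -- summability on the product
  have hgeo : Summable (fun k : ℕ => |x| ^ (k + 2)) := by
    have := (summable_geometric_of_lt_one (abs_nonneg x) hx).mul_right (|x| ^ 2)
    simpa [pow_add] using this
  have hsq : Summable (fun j : ℕ => (1 / ((j:ℝ) + 1)) ^ 2) := by
    have h0 : Summable (fun n : ℕ => 1 / (n:ℝ) ^ 2) :=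
      Real.summable_one_div_nat_pow.mpr one_lt_two
    have h1 := (summable_nat_add_iff 1).mpr h0
    apply h1.congr
    intro j
    push_cast
    rw [div_pow, one_pow]
  have hprod : Summable (fun p : ℕ × ℕ => (1 / ((p.1:ℝ) + 1)) ^ 2 * |x| ^ (p.2 + 2)) :=
    hsq.mul_of_nonneg hgeo (fun j => by positivity) (fun k => by positivity)
  have hnorm : Summable (fun p : ℕ × ℕ => ‖a p‖) := by
    apply Summable.of_nonneg_of_le (fun p => norm_nonneg _) _ hprod
    rintro ⟨j, k⟩
    have hj1 : (0:ℝ) < (j:ℝ) + 1 := by positivity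
    have hb0 : (0:ℝ) ≤ 1 / ((j:ℝ) + 1) := by positivity
    have hb1 : 1 / ((j:ℝ) + 1) ≤ 1 := by
      rw [div_le_one hj1]; linarith [Nat.cast_nonneg (α := ℝ) j]
    have heq : ‖a (j, k)‖ = |x| ^ (k + 2) / ((k:ℝ) + 2) * (1 / ((j:ℝ) + 1)) ^ (k + 2) := by
      simp only [ha_def, Real.norm_eq_abs, abs_mul, abs_div, abs_pow, abs_neg, abs_one,
        one_pow, one_mul, abs_of_pos hj1, abs_of_pos (show (0:ℝ) < (k:ℝ) + 2 by positivity)]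
    rw [heq, mul_comm]
    apply mul_le_mul
    · exact pow_le_pow_of_le_one hb0 hb1 (by omega)
    · exact div_le_self (by positivity) (by linarith [Nat.cast_nonneg (α := ℝ) k])
    · positivity
    · positivity
  have ha : Summable a := Summable.of_norm hnorm
  have hFnorm : Summable (fun j : ℕ => ∑' k, ‖a (j, k)‖) :=
    ((summable_prod_of_nonneg (fun p => norm_nonneg _)).mp hnorm).2
  have hsumf : Summable f := by
    apply Summable.of_norm_bounded hFnorm
    intro j
    rw [← (hA j).tsum_eq]
    exact norm_tsum_le_tsum_norm (hnorm.prod_factor j)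
  -- the double-sum swap
  have h1 : ∑' j, f j = ∑' j, ∑' k, a (j, k) := tsum_congr fun j => ((hA j).tsum_eq).symm
  have h2 : ∑' j, ∑' k, a (j, k) = ∑' k, ∑' j, a (j, k) :=
    (Summable.tsum_comm (f := fun j k => a (j, k)) ha).symm
  have h3 : ∀ k : ℕ, ∑' j : ℕ, a (j, k) =
      (-1) ^ k * (∑' n : ℕ, (1 / ((n:ℝ) + 1) ^ (k + 2) : ℝ)) * x ^ (k + 2) / ((k:ℝ) + 2) := by
    intro k
    have h0 : ∑' j : ℕ, a (j, k) =
        ∑' j : ℕ, ((-1) ^ k * x ^ (k + 2) / ((k:ℝ) + 2)) * (1 / ((j:ℝ) + 1)) ^ (k + 2) := rfl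
    have : ∑' j : ℕ, a (j, k) =
        ((-1) ^ k * x ^ (k + 2) / ((k:ℝ) + 2)) * ∑' j : ℕ, (1 / ((j:ℝ) + 1)) ^ (k + 2) := by
      rw [h0, tsum_mul_left]
    rw [this, tsum_congr (fun n : ℕ => by rw [div_pow, one_pow])]
    ring
  -- harmonic numbers
  have hharm : ∀ n : ℕ, (harmonic n : ℝ) = ∑ j ∈ range n, 1 / ((j:ℝ) + 1) := by
    intro n
    rw [harmonic]
    push_cast
    simp [one_div]
  -- the key finite identity
  have key : ∀ n : ℕ, 1 ≤ n →
      x * (Real.log n - (harmonic n : ℝ)) + (Real.log n - Real.log (x + 1 + n)) +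
        ∑ j ∈ range n, f j = Real.log (Real.GammaSeq (x + 1) n) := by
    intro n hn
    have hn0 : (0:ℝ) < n := by exact_mod_cast hn
    have hfac : (0:ℝ) < (n.factorial : ℝ) := by exact_mod_cast n.factorial_pos
    have hterm : ∀ j : ℕ, (0:ℝ) < x + 1 + j := fun j => by
      have := Nat.cast_nonneg (α := ℝ) j; linarith
    have hprodpos : (0:ℝ) < ∏ j ∈ range (n + 1), (x + 1 + j) :=
      Finset.prod_pos fun j _ => hterm j
    have hrp : (0:ℝ) < (n:ℝ) ^ (x + 1 : ℝ) := Real.rpow_pos_of_pos hn0 _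
    rw [Real.GammaSeq, Real.log_div (by positivity) hprodpos.ne',
      Real.log_mul hrp.ne' hfac.ne', Real.log_rpow hn0,
      Real.log_prod fun j _ => (hterm j).ne']
    have hlogfac : Real.log (n.factorial : ℝ) = ∑ j ∈ range n, Real.log ((j:ℝ) + 1) := by
      have hc : ((n.factorial : ℕ) : ℝ) = ∏ j ∈ range n, ((j:ℝ) + 1) := by
        rw [← Finset.prod_range_add_one_eq_factorial n]
        push_cast
        rfl
      rw [hc, Real.log_prod (s := range n) (f := fun j : ℕ => (j:ℝ) + 1) fun j _ => by positivity]
    rw [hlogfac, Finset.sum_range_succ, hharm n]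
    have hsub : ∀ j ∈ range n,
        Real.log ((j:ℝ) + 1) - Real.log (x + 1 + j) = f j - x * (1 / ((j:ℝ) + 1)) := by
      intro j _
      have hj : (0:ℝ) < (j:ℝ) + 1 := by positivity
      have hxj : Real.log (x + 1 + j) - Real.log ((j:ℝ) + 1) =
          Real.log (1 + x / ((j:ℝ) + 1)) := by
        rw [← Real.log_div (hterm j).ne' hj.ne']
        congr 1
        field_simp
        ring
      simp only [hf]
      rw [mul_one_div]
      linarith
    have hsum : ∑ j ∈ range n, Real.log ((j:ℝ) + 1) - ∑ j ∈ range n, Real.log (x + 1 + j)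
        = (∑ j ∈ range n, f j) - x * ∑ j ∈ range n, 1 / ((j:ℝ) + 1) := by
      rw [← Finset.sum_sub_distrib, Finset.sum_congr rfl hsub, Finset.sum_sub_distrib,
        Finset.mul_sum]
    linear_combination -hsum
  -- limits
  have hGpos : 0 < Real.Gamma (x + 1) := Real.Gamma_pos_of_pos hx1
  have hlog : Tendsto (fun n : ℕ => Real.log (Real.GammaSeq (x + 1) n)) atTop
      (𝓝 (Real.log (Real.Gamma (x + 1)))) :=
    ((Real.continuousAt_log hGpos.ne').tendsto).comp (Real.GammaSeq_tendsto_Gamma (x + 1))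
  have hγ : Tendsto (fun n : ℕ => x * (Real.log n - (harmonic n : ℝ))) atTop
      (𝓝 (x * (-Real.eulerMascheroniConstant))) := by
    have h := Real.tendsto_harmonic_sub_log.neg
    simp only [neg_sub] at h
    exact h.const_mul x
  have hmid : Tendsto (fun n : ℕ => Real.log n - Real.log (x + 1 + n)) atTop (𝓝 0) := by
    have h1 : Tendsto (fun n : ℕ => 1 + (x + 1) / (n:ℝ)) atTop (𝓝 1) := by
      have := (tendsto_const_div_atTop_nhds_zero_nat (x + 1)).const_add 1
      simpa using this
    have h2 : Tendsto (fun n : ℕ => -Real.log (1 + (x + 1) / (n:ℝ))) atTop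
        (𝓝 (-Real.log 1)) := (((Real.continuousAt_log one_ne_zero).tendsto).comp h1).neg
    rw [Real.log_one, neg_zero] at h2
    apply h2.congr'
    filter_upwards [eventually_ge_atTop 1] with n hn
    have hn0 : (0:ℝ) < n := by exact_mod_cast hn
    have hpos : (0:ℝ) < x + 1 + n := by linarith
    rw [show (1 + (x + 1) / (n:ℝ)) = (x + 1 + n) / n by field_simp; ring,
      Real.log_div hpos.ne' hn0.ne']
    ring
  have hpart : Tendsto (fun n : ℕ => ∑ j ∈ range n, f j) atTop (𝓝 (∑' j, f j)) :=
    hsumf.hasSum.tendsto_sum_nat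
  have hfinal : Real.log (Real.Gamma (x + 1)) =
      x * (-Real.eulerMascheroniConstant) + 0 + ∑' j, f j := by
    refine tendsto_nhds_unique hlog ?_
    refine ((hγ.add hmid).add hpart).congr' ?_
    filter_upwards [eventually_ge_atTop 1] with n hn
    exact key n hn
  rw [hfinal, h1, h2, tsum_congr h3]
  ring
end

section
/- For every real x > −1, the function y ↦ log Γ(y+1) has derivative log(x+1) + ∑_{n=0}^∞ ( log( (x+n+2)/(x+n+1) ) − 1/(x+n+1) ) at x. -/
open Real Set Filter Topology Finset

theorem hasDerivAt_log_gamma_log_series (x : ℝ) (hx : -1 < x) :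
    HasDerivAt (fun y : ℝ => Real.log (Real.Gamma (y + 1)))
      (Real.log (x + 1) +
        ∑' n : ℕ, (Real.log ((x + n + 2) / (x + n + 1)) - 1 / (x + n + 1))) x := by
  have hx1 : (0 : ℝ) < x + 1 := by linarith
  set f : ℝ → ℝ := fun y => Real.log (Real.Gamma y) with hf
  have hc : ConvexOn ℝ (Ioi 0) f := Real.convexOn_log_Gamma
  have h_rec : ∀ y : ℝ, 0 < y → f (y + 1) = f y + Real.log y := fun y hy => by
    simp only [hf, Real.Gamma_add_one hy.ne',
      Real.log_mul hy.ne' (Real.Gamma_pos_of_pos hy).ne', add_comm]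
  have hder : ∀ {y : ℝ}, 0 < y → DifferentiableAt ℝ f y := fun {y} hy => by
    refine (Real.differentiableAt_Gamma ?_).log (Real.Gamma_ne_zero ?_) <;>
      exact fun m => ne_of_gt (lt_of_le_of_lt (neg_nonpos.mpr m.cast_nonneg) hy)
  have hder_rec : ∀ y : ℝ, 0 < y → deriv f (y + 1) = deriv f y + 1 / y := by
    intro y hy
    rw [← deriv_comp_add_const, one_div, ← Real.deriv_log,
      ← deriv_add (hder (by positivity)) (Real.differentiableAt_log hy.ne')]
    apply Filter.EventuallyEq.deriv_eq
    filter_upwards [eventually_gt_nhds hy] using h_rec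
  -- shifted derivative formula
  have hder_shift : ∀ N : ℕ, deriv f (x + 1 + N) =
      deriv f (x + 1) + ∑ n ∈ range N, 1 / (x + n + 1) := by
    intro N
    induction N with
    | zero => simp
    | succ N ih =>
      have h : x + 1 + (N + 1 : ℕ) = (x + 1 + N) + 1 := by push_cast; ring
      rw [h, hder_rec _ (by have := N.cast_nonneg (α := ℝ); linarith), ih, sum_range_succ]
      push_cast; ring
  -- bounds from convexity
  have hlb : ∀ y : ℝ, 1 < y → Real.log (y - 1) ≤ deriv f y := by
    intro y hy
    have h1 : (0 : ℝ) < y - 1 := by linarith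
    refine (le_of_eq ?_).trans <| hc.slope_le_deriv (mem_Ioi.mpr h1)
      (mem_Ioi.mpr (by linarith)) (by linarith) (hder (by linarith))
    rw [slope_def_field, show y - (y - 1) = (1 : ℝ) by ring, div_one,
      show y = (y - 1) + 1 by ring, h_rec _ h1]
    ring_nf
  have hub : ∀ y : ℝ, 0 < y → deriv f y ≤ Real.log y := by
    intro y hy
    refine (hc.deriv_le_slope (mem_Ioi.mpr hy) (mem_Ioi.mpr (by linarith : (0:ℝ) < y + 1))
      (by linarith) (hder hy)).trans (le_of_eq ?_)
    rw [slope_def_field, show y + 1 - y = (1 : ℝ) by ring, div_one, h_rec _ hy]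
    ring
  -- the series terms
  set a : ℕ → ℝ := fun n => Real.log ((x + n + 2) / (x + n + 1)) - 1 / (x + n + 1) with ha
  have hpos : ∀ n : ℕ, (0 : ℝ) < x + n + 1 := fun n => by
    have := n.cast_nonneg (α := ℝ); linarith
  have hpos2 : ∀ n : ℕ, (0 : ℝ) < x + n + 2 := fun n => by
    have := n.cast_nonneg (α := ℝ); linarith
  -- telescoping of logs
  have tele : ∀ N : ℕ, ∑ n ∈ range N, Real.log ((x + n + 2) / (x + n + 1)) =
      Real.log (x + N + 1) - Real.log (x + 1) := by
    intro N
    induction N with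
    | zero => simp
    | succ N ih =>
      rw [sum_range_succ, ih, Real.log_div (hpos2 N).ne' (hpos N).ne']
      push_cast; ring_nf
  have hSsum : ∀ N : ℕ, ∑ n ∈ range N, a n =
      Real.log (x + N + 1) - Real.log (x + 1) - ∑ n ∈ range N, 1 / (x + n + 1) := by
    intro N
    rw [ha, Finset.sum_sub_distrib, tele N]
  -- S_N tends to deriv f (x+1) - log (x+1)
  have hxN : Tendsto (fun N : ℕ => x + N) atTop atTop :=
    tendsto_atTop_add_const_left _ _ tendsto_natCast_atTop_atTop
  have hlog0 : Tendsto (fun N : ℕ => Real.log (x + N + 1) - Real.log (x + N)) atTop (𝓝 0) := by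
    have h1 : Tendsto (fun N : ℕ => 1 + (x + N)⁻¹) atTop (𝓝 1) := by
      simpa using (tendsto_const_nhds (x := (1:ℝ))).add (tendsto_inv_atTop_zero.comp hxN)
    have h2 : Tendsto (fun N : ℕ => Real.log (1 + (x + N)⁻¹)) atTop (𝓝 0) := by
      have := (Real.continuousAt_log one_ne_zero).tendsto.comp h1
      simpa [Function.comp_def] using this
    refine h2.congr' ?_
    filter_upwards [eventually_ge_atTop 1] with N hN
    have hN0 : (0 : ℝ) < x + N := by
      have : (1 : ℝ) ≤ (N : ℝ) := by exact_mod_cast hN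
      linarith
    rw [show (1 : ℝ) + (x + N)⁻¹ = (x + N + 1) / (x + N) by field_simp,
      Real.log_div (by linarith) hN0.ne']
  have herr : Tendsto (fun N : ℕ => deriv f (x + 1 + N) - Real.log (x + N + 1)) atTop (𝓝 0) := by
    refine tendsto_of_tendsto_of_tendsto_of_le_of_le' (by simpa using hlog0.neg)
      tendsto_const_nhds ?_ ?_
    · filter_upwards [eventually_ge_atTop 1] with N hN
      have hN0 : (0 : ℝ) < x + N := by
        have : (1 : ℝ) ≤ (N : ℝ) := by exact_mod_cast hN
        linarith
      have := hlb (x + 1 + N) (by linarith)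
      have he : x + 1 + (N : ℝ) - 1 = x + N := by ring
      rw [he] at this
      linarith
    · filter_upwards with N
      have := hub (x + 1 + N) (by have := N.cast_nonneg (α := ℝ); linarith)
      have he : Real.log (x + 1 + N) = Real.log (x + N + 1) := by ring_nf
      linarith [he ▸ this]
  have hAtend : Tendsto (fun N : ℕ => ∑ n ∈ range N, a n) atTop
      (𝓝 (deriv f (x + 1) - Real.log (x + 1))) := by
    have h := (tendsto_const_nhds (x := deriv f (x + 1) - Real.log (x + 1))).sub herr
    rw [sub_zero] at h
    refine h.congr' ?_
    filter_upwards with N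
    rw [hSsum N, hder_shift N]; ring
  -- nonpositivity of terms
  have hanp : ∀ n : ℕ, a n ≤ 0 := by
    intro n
    have h1 : Real.log ((x + n + 2) / (x + n + 1)) ≤ (x + n + 2) / (x + n + 1) - 1 :=
      Real.log_le_sub_one_of_pos (div_pos (hpos2 n) (hpos n))
    have h2 : (x + n + 2) / (x + n + 1) - 1 = 1 / (x + n + 1) := by
      rw [div_sub_one (hpos n).ne', div_eq_div_iff (hpos n).ne' (hpos n).ne']
      ring
    rw [h2] at h1
    simp only [ha]
    linarith
  -- summability
  have hb : Summable a := by
    have hmono : Monotone (fun N : ℕ => ∑ n ∈ range N, -a n) := by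
      apply monotone_nat_of_le_succ
      intro N
      rw [sum_range_succ]
      have := hanp N
      linarith
    have hbt : Tendsto (fun N : ℕ => ∑ n ∈ range N, -a n) atTop
        (𝓝 (-(deriv f (x + 1) - Real.log (x + 1)))) := by
      simpa [Finset.sum_neg_distrib] using hAtend.neg
    have hbd : ∀ N, ∑ n ∈ range N, -a n ≤ -(deriv f (x + 1) - Real.log (x + 1)) :=
      fun N => hmono.ge_of_tendsto hbt N
    have := summable_of_sum_range_le (fun n => by linarith [hanp n]) hbd
    simpa using this.neg
  have htsum : ∑' n : ℕ, a n = deriv f (x + 1) - Real.log (x + 1) :=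
    tendsto_nhds_unique hb.hasSum.tendsto_sum_nat hAtend
  -- conclude
  have hD : HasDerivAt f (deriv f (x + 1)) (x + 1) := (hder hx1).hasDerivAt
  have := hD.comp_add_const x 1
  refine this.congr_deriv ?_
  rw [htsum]; ring
end

section
/- Let H(x) = ∑_{k=0}^∞ ( 1/(k+1) − 1/(k+1+x) ). Then the limit as x → 1 (with x ≠ 1) of H(x)/(x(x−1)) − 1/((x−1)(2x−1)) exists and equals π²/6. -/
open Filter Topology

private lemma hasSum_b : HasSum (fun k : ℕ => (1 : ℝ) / ((k + 1) * (k + 2))) 1 := by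
  rw [hasSum_iff_tendsto_nat_of_nonneg (fun i => by positivity)]
  have key : ∀ n : ℕ, ∑ k ∈ Finset.range n, (1 : ℝ) / ((k + 1) * (k + 2)) =
      1 - 1 / (n + 1) := by
    intro n
    have : ∀ k ∈ Finset.range n, (1 : ℝ) / ((k + 1) * (k + 2)) =
        (fun i : ℕ => (1 : ℝ) / (i + 1)) k - (fun i : ℕ => (1 : ℝ) / (i + 1)) (k + 1) := by
      intro k _
      have h1 : ((k : ℝ) + 1) ≠ 0 := by positivity
      have h2 : ((k : ℝ) + 2) ≠ 0 := by positivity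
      push_cast
      rw [div_sub_div _ _ h1 (by positivity : ((k : ℝ) + 1 + 1) ≠ 0)]
      rw [show (1 : ℝ) * ((k : ℝ) + 1 + 1) - ((k : ℝ) + 1) * 1 = 1 by ring,
        show ((k : ℝ) + 1) * ((k : ℝ) + 1 + 1) = ((k : ℝ) + 1) * ((k : ℝ) + 2) by ring]
    rw [Finset.sum_congr rfl this, Finset.sum_range_sub']
    push_cast
    norm_num
  simp only [key]
  have := tendsto_one_div_add_atTop_nhds_zero_nat (𝕜 := ℝ)
  have h := tendsto_const_nhds (x := (1 : ℝ)) (f := atTop).sub this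
  simpa using h

private lemma summable_c {x : ℝ} (hx : (1 : ℝ) / 2 ≤ x) :
    Summable (fun k : ℕ => (1 : ℝ) / ((k + 1) * (k + 2) * (k + 1 + x))) := by
  have hs : Summable (fun k : ℕ => (1 : ℝ) / (k + 1) ^ 2) := by
    have h := (summable_nat_add_iff 1).2 (Real.summable_one_div_nat_pow.mpr one_lt_two)
    convert h using 2 with k
    · rfl
    push_cast
    ring
  refine hs.of_nonneg_of_le (fun k => ?_) (fun k => ?_)
  · have h0 : (0 : ℝ) < (k : ℝ) + 1 + x := by linarith [Nat.cast_nonneg (α := ℝ) k]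
    positivity
  · have h0 : (0 : ℝ) < (k : ℝ) + 1 + x := by linarith [Nat.cast_nonneg (α := ℝ) k]
    have hk : (0 : ℝ) ≤ (k : ℝ) := Nat.cast_nonneg k
    have hpos : (0 : ℝ) < ((k : ℝ) + 1) ^ 2 := by positivity
    apply one_div_le_one_div_of_le hpos
    nlinarith

private lemma summable_a {x : ℝ} (hx : (1 : ℝ) / 2 ≤ x) :
    Summable (fun k : ℕ => (1 : ℝ) / ((k + 1) * (k + 1 + x))) := by
  have hs : Summable (fun k : ℕ => (1 : ℝ) / (k + 1) ^ 2) := by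
    have h := (summable_nat_add_iff 1).2 (Real.summable_one_div_nat_pow.mpr one_lt_two)
    convert h using 2 with k
    · rfl
    push_cast
    ring
  refine hs.of_nonneg_of_le (fun k => ?_) (fun k => ?_)
  · have h0 : (0 : ℝ) < (k : ℝ) + 1 + x := by linarith [Nat.cast_nonneg (α := ℝ) k]
    positivity
  · have h0 : (0 : ℝ) < (k : ℝ) + 1 + x := by linarith [Nat.cast_nonneg (α := ℝ) k]
    have hk : (0 : ℝ) ≤ (k : ℝ) := Nat.cast_nonneg k
    have hpos : (0 : ℝ) < ((k : ℝ) + 1) ^ 2 := by positivity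
    apply one_div_le_one_div_of_le hpos
    nlinarith

theorem tendsto_harmonic_expr_pi_sq_div_six :
    Tendsto (fun x : ℝ =>
        (∑' k : ℕ, (1 / (k + 1) - 1 / (k + 1 + x) : ℝ)) / (x * (x - 1)) -
          1 / ((x - 1) * (2 * x - 1)))
      (𝓝[≠] 1) (𝓝 (Real.pi ^ 2 / 6)) := by
  set S : ℝ → ℝ := fun x => ∑' k : ℕ, (1 : ℝ) / ((k + 1) * (k + 2) * (k + 1 + x)) with hS
  -- Basel shifted by 2
  have hbasel : HasSum (fun k : ℕ => (1 : ℝ) / ((k : ℝ) + 2) ^ 2) (Real.pi ^ 2 / 6 - 1) := by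
    have h2 : HasSum (fun n : ℕ => (1 : ℝ) / ((n + 2 : ℕ) : ℝ) ^ 2) (Real.pi ^ 2 / 6 - 1) := by
      rw [hasSum_nat_add_iff (f := fun n : ℕ => (1 : ℝ) / (n : ℝ) ^ 2) 2]
      convert hasSum_zeta_two using 1
      · rfl
      norm_num [Finset.sum_range_succ]
    convert h2 using 2 with k
    push_cast
    ring
  -- value of S at 1
  have hS1 : HasSum (fun k : ℕ => (1 : ℝ) / ((k + 1) * (k + 2) * (k + 1 + 1)))
      (2 - Real.pi ^ 2 / 6) := by
    have hsum := hasSum_b.sub hbasel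
    have heq : (fun k : ℕ => (1 : ℝ) / ((k + 1) * (k + 2)) - 1 / ((k : ℝ) + 2) ^ 2) =
        fun k : ℕ => (1 : ℝ) / ((k + 1) * (k + 2) * (k + 1 + 1)) := by
      funext k
      have h1 : ((k : ℝ) + 1) ≠ 0 := by positivity
      have h2 : ((k : ℝ) + 2) ≠ 0 := by positivity
      field_simp
      ring
    rw [heq, show (1 : ℝ) - (Real.pi ^ 2 / 6 - 1) = 2 - Real.pi ^ 2 / 6 by ring] at hsum
    exact hsum
  -- S tends to S 1 = 2 - pi^2/6
  have hStendsto : Tendsto S (𝓝[≠] (1 : ℝ)) (𝓝 (2 - Real.pi ^ 2 / 6)) := by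
    rw [hS, ← hS1.tsum_eq]
    apply tendsto_tsum_of_dominated_convergence
      (bound := fun k : ℕ => (1 : ℝ) / (k + 1) ^ 2)
    · have h := (summable_nat_add_iff 1).2 (Real.summable_one_div_nat_pow.mpr one_lt_two)
      convert h using 2 with k
      · rfl
      push_cast
      ring
    · intro k
      have hcont : ContinuousAt (fun x : ℝ => (1 : ℝ) / ((k + 1) * (k + 2) * (k + 1 + x))) 1 := by
        apply ContinuousAt.div continuousAt_const (by fun_prop)
        have h1 : (0 : ℝ) < (k : ℝ) + 1 := by positivity
        have h2 : (0 : ℝ) < (k : ℝ) + 2 := by positivity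
        positivity
      exact hcont.tendsto.mono_left nhdsWithin_le_nhds
    · have hmem : Set.Ioo (1 / 2 : ℝ) (3 / 2) ∈ 𝓝[≠] (1 : ℝ) :=
        nhdsWithin_le_nhds (Ioo_mem_nhds (by norm_num) (by norm_num))
      filter_upwards [hmem] with x hx k
      have hxhalf : (1 / 2 : ℝ) ≤ x := le_of_lt hx.1
      have h0 : (0 : ℝ) < (k : ℝ) + 1 + x := by linarith [Nat.cast_nonneg (α := ℝ) k]
      have hk : (0 : ℝ) ≤ (k : ℝ) := Nat.cast_nonneg k
      have hterm : (0 : ℝ) ≤ (1 : ℝ) / ((k + 1) * (k + 2) * (k + 1 + x)) := by positivity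
      rw [Real.norm_eq_abs, abs_of_nonneg hterm]
      have hpos : (0 : ℝ) < ((k : ℝ) + 1) ^ 2 := by positivity
      apply one_div_le_one_div_of_le hpos
      nlinarith
  -- the target function eventually equals 2/(2x-1) - S x
  have hev : ∀ᶠ x in 𝓝[≠] (1 : ℝ),
      (∑' k : ℕ, (1 / (k + 1) - 1 / (k + 1 + x) : ℝ)) / (x * (x - 1)) -
        1 / ((x - 1) * (2 * x - 1)) = 2 / (2 * x - 1) - S x := by
    have hmem : Set.Ioo (1 / 2 : ℝ) (3 / 2) ∈ 𝓝[≠] (1 : ℝ) :=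
      nhdsWithin_le_nhds (Ioo_mem_nhds (by norm_num) (by norm_num))
    filter_upwards [hmem, self_mem_nhdsWithin] with x hx hne
    have hne1 : x ≠ 1 := hne
    have hxhalf : (1 / 2 : ℝ) ≤ x := le_of_lt hx.1
    have hx0 : (0 : ℝ) < x := by linarith
    have hA := summable_a hxhalf
    have hC := summable_c hxhalf
    have step1 : (∑' k : ℕ, (1 / (k + 1) - 1 / (k + 1 + x) : ℝ)) =
        x * ∑' k : ℕ, (1 : ℝ) / ((k + 1) * (k + 1 + x)) := by
      rw [← tsum_mul_left]
      refine tsum_congr fun k => ?_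
      have h1 : ((k : ℝ) + 1) ≠ 0 := by positivity
      have h2 : (0 : ℝ) < (k : ℝ) + 1 + x := by linarith [Nat.cast_nonneg (α := ℝ) k]
      field_simp
      ring
    have step2 : (∑' k : ℕ, (1 : ℝ) / ((k + 1) * (k + 1 + x))) = 1 + (1 - x) * S x := by
      have heq : ∀ k : ℕ, (1 : ℝ) / ((k + 1) * (k + 1 + x)) =
          1 / ((k + 1) * (k + 2)) + (1 - x) * (1 / ((k + 1) * (k + 2) * (k + 1 + x))) := by
        intro k
        have h1 : ((k : ℝ) + 1) ≠ 0 := by positivity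
        have h2 : ((k : ℝ) + 2) ≠ 0 := by positivity
        have h3 : ((k : ℝ) + 1 + x) ≠ 0 := by
          have : (0 : ℝ) < (k : ℝ) + 1 + x := by linarith [Nat.cast_nonneg (α := ℝ) k]
          exact ne_of_gt this
        field_simp
        ring
      rw [tsum_congr heq, Summable.tsum_add hasSum_b.summable (hC.mul_left _), hasSum_b.tsum_eq,
        tsum_mul_left]
    rw [step1, step2]
    have d1 : x - 1 ≠ 0 := sub_ne_zero.mpr hne1
    have d2 : 2 * x - 1 ≠ 0 := by
      intro h
      have : x = 1 / 2 := by linarith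
      linarith [hx.1]
    have d2' : x * 2 - 1 ≠ 0 := by rwa [mul_comm]
    field_simp
    ring
  -- conclude
  have hlim : Tendsto (fun x : ℝ => 2 / (2 * x - 1) - S x) (𝓝[≠] (1 : ℝ))
      (𝓝 (Real.pi ^ 2 / 6)) := by
    have h1 : Tendsto (fun x : ℝ => 2 / (2 * x - 1)) (𝓝[≠] (1 : ℝ)) (𝓝 2) := by
      have hcont : ContinuousAt (fun x : ℝ => 2 / (2 * x - 1)) 1 :=
        ContinuousAt.div continuousAt_const (by fun_prop) (by norm_num)
      have h2 : Tendsto (fun x : ℝ => 2 / (2 * x - 1)) (𝓝[≠] (1 : ℝ)) (𝓝 (2 / (2 * 1 - 1))) :=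
        hcont.tendsto.mono_left nhdsWithin_le_nhds
      norm_num at h2
      exact h2
    have h := h1.sub hStendsto
    rw [show (2 : ℝ) - (2 - Real.pi ^ 2 / 6) = Real.pi ^ 2 / 6 by ring] at h
    exact h
  exact hlim.congr' (hev.mono fun x hx => hx.symm)
end

section
/- Let H(x) = ∑_{k=0}^∞ ( 1/(k+1) − 1/(k+1+x) ). Then the limit as x → 1 (with x ≠ 1) of (2x − x²)/(x−1)² + π²·x/(6(x−1)) − (2x−1)·H(x)/(x(x−1)²) exists and equals ∑_{n=0}^∞ 1/(n+1)³ (i.e. ζ(3)). -/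
open Filter Topology

namespace ZetaThreeLimitAux

lemma hasSum_A : HasSum (fun k : ℕ => 1 / ((k:ℝ)+1)^2) (Real.pi^2/6) := by
  have h := hasSum_zeta_two
  rw [← hasSum_nat_add_iff' 1] at h
  simpa using h

lemma hasSum_tele : HasSum (fun k : ℕ => 1/((k:ℝ)+1) - 1/((k:ℝ)+2)) 1 := by
  rw [hasSum_iff_tendsto_nat_of_nonneg]
  · have hs : ∀ n : ℕ, ∑ i ∈ Finset.range n, (1/((i:ℝ)+1) - 1/((i:ℝ)+2)) = 1 - 1/((n:ℝ)+1) := by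
      intro n
      induction n with
      | zero => simp
      | succ n ih =>
        rw [Finset.sum_range_succ, ih]
        have h1 : ((n:ℝ)+1) ≠ 0 := by positivity
        have h2 : ((n:ℝ)+2) ≠ 0 := by positivity
        push_cast
        field_simp
        ring
    simp only [hs]
    simpa using tendsto_const_nhds.sub (tendsto_one_div_add_atTop_nhds_zero_nat (𝕜 := ℝ))
  · intro i
    have hp : (0:ℝ) < (i:ℝ)+1 := by positivity
    rw [sub_nonneg]
    exact one_div_le_one_div_of_le hp (by linarith)

lemma hasSum_A' : HasSum (fun k : ℕ => 1 / ((k:ℝ)+2)^2) (Real.pi^2/6 - 1) := by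
  have h := hasSum_A
  rw [← hasSum_nat_add_iff' 1] at h
  convert h using 1
  · rfl
  · funext k
    push_cast
    ring
  · norm_num

lemma hasSum_B : HasSum (fun k : ℕ => 1/(((k:ℝ)+1)^2*((k:ℝ)+2))) (Real.pi^2/6 - 1) := by
  have h := hasSum_A.sub hasSum_tele
  have e : (fun k : ℕ => 1/((k:ℝ)+1)^2 - (1/((k:ℝ)+1) - 1/((k:ℝ)+2)))
      = fun k : ℕ => 1/(((k:ℝ)+1)^2*((k:ℝ)+2)) := by
    funext k
    have h1 : ((k:ℝ)+1) ≠ 0 := by positivity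
    have h2 : ((k:ℝ)+2) ≠ 0 := by positivity
    field_simp
    ring
  rwa [e] at h

lemma hasSum_C : HasSum (fun k : ℕ => 1/(((k:ℝ)+1)^2*((k:ℝ)+2)^2)) (Real.pi^2/3 - 3) := by
  have h := (hasSum_A.add hasSum_A').sub (hasSum_tele.mul_left 2)
  have e : (fun k : ℕ => 1/((k:ℝ)+1)^2 + 1/((k:ℝ)+2)^2 - 2*(1/((k:ℝ)+1) - 1/((k:ℝ)+2)))
      = fun k : ℕ => 1/(((k:ℝ)+1)^2*((k:ℝ)+2)^2) := by
    funext k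
    have h1 : ((k:ℝ)+1) ≠ 0 := by positivity
    have h2 : ((k:ℝ)+2) ≠ 0 := by positivity
    field_simp
    ring
  rw [e] at h
  convert h using 1
  · rfl
  ring

lemma summable_cube : Summable (fun n : ℕ => 1 / ((n:ℝ)+1)^3) := by
  have h : Summable (fun n : ℕ => 1 / (n:ℝ)^3) :=
    Real.summable_one_div_nat_pow.mpr (by norm_num)
  rw [← summable_nat_add_iff 1] at h
  convert h using 2 with n
  · rfl
  push_cast
  ring

lemma hasSum_cube' :
    HasSum (fun k : ℕ => 1 / ((k:ℝ)+2)^3) ((∑' n : ℕ, 1/((n:ℝ)+1)^3) - 1) := by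
  have h := summable_cube.hasSum
  rw [← hasSum_nat_add_iff' 1] at h
  convert h using 1
  · rfl
  · funext k
    push_cast
    ring
  · norm_num

lemma hasSum_D : HasSum (fun k : ℕ => 1/(((k:ℝ)+1)^2*((k:ℝ)+2)^3))
    ((∑' n : ℕ, 1/((n:ℝ)+1)^3) + Real.pi^2/2 - 6) := by
  have h := ((hasSum_tele.mul_left (-3)).add hasSum_A).add
    ((hasSum_A'.mul_left 2).add hasSum_cube')
  have e : (fun k : ℕ => (-3)*(1/((k:ℝ)+1) - 1/((k:ℝ)+2)) + 1/((k:ℝ)+1)^2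
        + (2*(1/((k:ℝ)+2)^2) + 1/((k:ℝ)+2)^3))
      = fun k : ℕ => 1/(((k:ℝ)+1)^2*((k:ℝ)+2)^3) := by
    funext k
    have h1 : ((k:ℝ)+1) ≠ 0 := by positivity
    have h2 : ((k:ℝ)+2) ≠ 0 := by positivity
    field_simp
    ring
  rw [e] at h
  convert h using 1
  · rfl
  ring

lemma contG : Continuous (fun x : ℝ =>
    ∑' k : ℕ, 1/(((k:ℝ)+1)^2*((k:ℝ)+2)^2*((k:ℝ)+1+max x (1/2)))) := by
  apply continuous_tsum (u := fun k : ℕ => 1/(((k:ℝ)+1)^2*((k:ℝ)+2)^2))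
  · intro k
    apply Continuous.div continuous_const
    · fun_prop
    · intro x
      have hm : (1/2:ℝ) ≤ max x (1/2) := le_max_right _ _
      have h1 : (0:ℝ) < ((k:ℝ)+1)^2*((k:ℝ)+2)^2 := by positivity
      have h2 : (0:ℝ) < (k:ℝ)+1+max x (1/2) := by
        have : (0:ℝ) ≤ (k:ℝ) := Nat.cast_nonneg k
        linarith
      exact ne_of_gt (mul_pos h1 h2)
  · exact hasSum_C.summable
  · intro k x
    have hm : (1/2:ℝ) ≤ max x (1/2) := le_max_right _ _
    have hk : (0:ℝ) ≤ (k:ℝ) := Nat.cast_nonneg k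
    have h1 : (0:ℝ) < ((k:ℝ)+1)^2*((k:ℝ)+2)^2 := by positivity
    have h2 : (0:ℝ) < (k:ℝ)+1+max x (1/2) := by linarith
    have hpos : (0:ℝ) < ((k:ℝ)+1)^2*((k:ℝ)+2)^2*((k:ℝ)+1+max x (1/2)) := mul_pos h1 h2
    rw [Real.norm_eq_abs, abs_of_nonneg (le_of_lt (one_div_pos.mpr hpos))]
    apply one_div_le_one_div_of_le h1
    exact le_mul_of_one_le_right (le_of_lt h1) (by linarith)

lemma main_eq {x : ℝ} (hxa : 1/2 < x) (hxb : x < 3/2) (hx1 : x ≠ 1) :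
    (2 * x - x ^ 2) / (x - 1) ^ 2 + Real.pi ^ 2 * x / (6 * (x - 1)) -
      (2 * x - 1) * (∑' k : ℕ, (1 / (k + 1) - 1 / (k + 1 + x) : ℝ)) / (x * (x - 1) ^ 2)
    = Real.pi^2*(1-4*x)/6 + 6*x
      + x*(2*x-1)*(∑' k : ℕ, 1/(((k:ℝ)+1)^2*((k:ℝ)+2)^2*((k:ℝ)+1+max x (1/2)))) := by
  have hmax : max x (1/2:ℝ) = x := max_eq_left (le_of_lt hxa)
  rw [hmax]
  have hx0 : x ≠ 0 := by intro h; rw [h] at hxa; norm_num at hxa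
  have hxm1 : x - 1 ≠ 0 := sub_ne_zero.mpr hx1
  have h2x : 2*x - 1 ≠ 0 := by intro h; nlinarith
  have hsumh : Summable (fun k : ℕ => (1 / ((k:ℝ) + 1) - 1 / ((k:ℝ) + 1 + x))) := by
    apply Summable.of_nonneg_of_le _ _ (hasSum_A.summable.mul_left 2)
    · intro k
      have hp : (0:ℝ) < (k:ℝ)+1 := by positivity
      rw [sub_nonneg]
      exact one_div_le_one_div_of_le hp (by linarith)
    · intro k
      have hp : (0:ℝ) < (k:ℝ)+1 := by positivity
      have hq : (0:ℝ) < (k:ℝ)+1+x := by linarith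
      rw [div_sub_div _ _ hp.ne' hq.ne', mul_one_div, div_le_div_iff₀ (by positivity) (by positivity)]
      nlinarith [sq_nonneg ((k:ℝ)+1), hp]
  have hsumt : Summable (fun k : ℕ => 1/(((k:ℝ)+1)^2*((k:ℝ)+2)^2*((k:ℝ)+1+x))) := by
    apply Summable.of_nonneg_of_le _ _ hasSum_C.summable
    · intro k
      have h1 : (0:ℝ) < ((k:ℝ)+1)^2*((k:ℝ)+2)^2 := by positivity
      have h2 : (0:ℝ) < (k:ℝ)+1+x := by
        have : (0:ℝ) ≤ (k:ℝ) := Nat.cast_nonneg k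
        linarith
      exact le_of_lt (one_div_pos.mpr (mul_pos h1 h2))
    · intro k
      have h1 : (0:ℝ) < ((k:ℝ)+1)^2*((k:ℝ)+2)^2 := by positivity
      have hk : (0:ℝ) ≤ (k:ℝ) := Nat.cast_nonneg k
      apply one_div_le_one_div_of_le h1
      exact le_mul_of_one_le_right (le_of_lt h1) (by linarith)
  have hL : HasSum (fun k : ℕ => (x^2*(x-1)) * (1/((k:ℝ)+1)^2)
        - (2*x-1) * (1/((k:ℝ)+1) - 1/((k:ℝ)+1+x))
        - (x^2*(2*x-1)*(x-1)^2) * (1/(((k:ℝ)+1)^2*((k:ℝ)+2)^2*((k:ℝ)+1+x))))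
      ((x^2*(x-1)) * (Real.pi^2/6)
        - (2*x-1) * (∑' k : ℕ, (1/((k:ℝ)+1) - 1/((k:ℝ)+1+x)))
        - (x^2*(2*x-1)*(x-1)^2) * (∑' k : ℕ, 1/(((k:ℝ)+1)^2*((k:ℝ)+2)^2*((k:ℝ)+1+x)))) :=
    ((hasSum_A.mul_left _).sub (hsumh.hasSum.mul_left _)).sub (hsumt.hasSum.mul_left _)
  have hR := ((hasSum_A.mul_left (x*(x^2-3*x+1))).add
      (hasSum_B.mul_left (x^2*(2*x-1)))).sub (hasSum_C.mul_left (x^2*(2*x-1)*(x-1)))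
  have e : (fun k : ℕ => (x*(x^2-3*x+1)) * (1/((k:ℝ)+1)^2)
        + (x^2*(2*x-1)) * (1/(((k:ℝ)+1)^2*((k:ℝ)+2)))
        - (x^2*(2*x-1)*(x-1)) * (1/(((k:ℝ)+1)^2*((k:ℝ)+2)^2)))
      = (fun k : ℕ => (x^2*(x-1)) * (1/((k:ℝ)+1)^2)
        - (2*x-1) * (1/((k:ℝ)+1) - 1/((k:ℝ)+1+x))
        - (x^2*(2*x-1)*(x-1)^2) * (1/(((k:ℝ)+1)^2*((k:ℝ)+2)^2*((k:ℝ)+1+x)))) := by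
    funext k
    have hp : ((k:ℝ)+1) ≠ 0 := by positivity
    have hp2 : ((k:ℝ)+2) ≠ 0 := by positivity
    have hq : ((k:ℝ)+1+x) ≠ 0 := by
      have : (0:ℝ) ≤ (k:ℝ) := Nat.cast_nonneg k
      intro h; nlinarith
    field_simp
    ring
  rw [e] at hR
  have KEY := hL.unique hR
  set S := ∑' k : ℕ, (1/((k:ℝ)+1) - 1/((k:ℝ)+1+x)) with hSdef
  set T := ∑' k : ℕ, 1/(((k:ℝ)+1)^2*((k:ℝ)+2)^2*((k:ℝ)+1+x)) with hTdef
  field_simp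
  linear_combination 6 * KEY



end ZetaThreeLimitAux

open ZetaThreeLimitAux in
theorem tendsto_harmonic_expr_zeta_three :
    Tendsto (fun x : ℝ =>
        (2 * x - x ^ 2) / (x - 1) ^ 2 + Real.pi ^ 2 * x / (6 * (x - 1)) -
          (2 * x - 1) * (∑' k : ℕ, (1 / (k + 1) - 1 / (k + 1 + x) : ℝ)) / (x * (x - 1) ^ 2))
      (𝓝[≠] 1) (𝓝 (∑' n : ℕ, (1 / (n + 1) ^ 3 : ℝ))) := by
  set F : ℝ → ℝ := fun x => Real.pi^2*(1-4*x)/6 + 6*x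
      + x*(2*x-1)*(∑' k : ℕ, 1/(((k:ℝ)+1)^2*((k:ℝ)+2)^2*((k:ℝ)+1+max x (1/2)))) with hF
  have hcont : Continuous F := by
    apply Continuous.add (by fun_prop)
    exact (continuous_id'.mul (by fun_prop)).mul contG
  have hDval : (∑' k : ℕ, 1/(((k:ℝ)+1)^2*((k:ℝ)+2)^2*((k:ℝ)+1+max (1:ℝ) (1/2))))
      = (∑' n : ℕ, 1/((n:ℝ)+1)^3) + Real.pi^2/2 - 6 := by
    have e : (fun k : ℕ => 1/(((k:ℝ)+1)^2*((k:ℝ)+2)^2*((k:ℝ)+1+max (1:ℝ) (1/2))))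
        = fun k : ℕ => 1/(((k:ℝ)+1)^2*((k:ℝ)+2)^3) := by
      funext k
      have hm : max (1:ℝ) (1/2) = 1 := by norm_num
      rw [hm]
      have h1 : ((k:ℝ)+1) ≠ 0 := by positivity
      have h2 : ((k:ℝ)+2) ≠ 0 := by positivity
      field_simp
      ring
    rw [e, hasSum_D.tsum_eq]
  have hv : F 1 = ∑' n : ℕ, (1 / ((n:ℝ) + 1) ^ 3) := by
    rw [hF]
    simp only
    rw [hDval]
    ring
  have htend : Tendsto F (𝓝[≠] (1:ℝ)) (𝓝 (∑' n : ℕ, (1 / ((n:ℝ) + 1) ^ 3))) := by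
    have h := hcont.tendsto 1
    rw [hv] at h
    exact h.mono_left nhdsWithin_le_nhds
  refine Tendsto.congr' ?_ htend
  filter_upwards [self_mem_nhdsWithin,
    nhdsWithin_le_nhds (Ioo_mem_nhds (by norm_num : (1/2:ℝ) < 1) (by norm_num : (1:ℝ) < 3/2))]
    with x hx hxI
  have hx1 : x ≠ 1 := hx
  exact (main_eq hxI.1 hxI.2 hx1).symm
end
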